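/- arXiv:math/0612593 — 5 statements merged into one kernel-verified Lean document; each statement's English description precedes it below -/
import Mathlib

section
/- Let A : X → ℝ be θ-Hölder for some θ ∈ (0,1] and assume Ω(A) is the disjoint union of finitely many irreducible components C_1, …, C_r. For every continuous sub-action u for A and all indices i, j, the function (x, y) ↦ h_A(x, y) − u(y) + u(x) is constant on C_i × C_j; that is, for all (x, y), (x̄, ȳ) ∈ C_i × C_j one has h_A(x, y) − u(y) + u(x) = h_A(x̄, ȳ) − u(ȳ) + u(x̄). -/
open MeasureTheory Filter Topology

section GLT

variable {X : Type*} [MetricSpace X]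

/-- A transitive expanding dynamical system: a continuous, surjective, open,
several-to-one map whose inverse branches are uniformly contracting, and which
is topologically transitive. -/
structure IsExpandingTransitive (T : X → X) : Prop where
  cont : Continuous T
  surj : Function.Surjective T
  isOpenMap : IsOpenMap T
  finite_preimages : ∀ x : X, {y : X | T y = x}.Finite
  transitive : ∀ U V : Set X, IsOpen U → IsOpen V → U.Nonempty → V.Nonempty →
    ∃ n : ℕ, ((T^[n]) ⁻¹' U ∩ V).Nonempty
  contracting : ∃ lam : ℝ, 0 < lam ∧ lam < 1 ∧ ∃ δ : ℝ, 0 < δ ∧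
    ∀ x y : X, dist x y ≤ δ → dist x y ≤ lam * dist (T x) (T y)

/-- `Abar` is the ergodic minimizing value of `A`: the minimum (attained) of
`∫ A dμ` over all `T`-invariant Borel probability measures `μ`. -/
def IsErgMinValue [MeasurableSpace X] (T : X → X) (A : X → ℝ) (Abar : ℝ) : Prop :=
  (∃ μ : Measure X, IsProbabilityMeasure μ ∧ MeasurePreserving T μ μ ∧ (∫ x, A x ∂μ) = Abar) ∧
  ∀ μ : Measure X, IsProbabilityMeasure μ → MeasurePreserving T μ μ → Abar ≤ ∫ x, A x ∂μ

/-- `f` is θ-Hölder. -/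
def IsThetaHolder (θ : ℝ) (f : X → ℝ) : Prop :=
  ∃ C : ℝ, 0 ≤ C ∧ ∀ x y : X, |f x - f y| ≤ C * dist x y ^ θ

/-- `u` is a (continuous) sub-action for `A` with ergodic minimizing value `Abar`. -/
def IsSubaction (T : X → X) (A : X → ℝ) (Abar : ℝ) (u : X → ℝ) : Prop :=
  Continuous u ∧ ∀ x : X, u (T x) - u x + Abar ≤ A x

/-- The contact locus of a sub-action `u`. -/
def contactLocus (T : X → X) (A : X → ℝ) (Abar : ℝ) (u : X → ℝ) : Set X :=
  {x : X | A x = u (T x) - u x + Abar}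

/-- The set `Ω(A)` of non-wandering points with respect to `A`. -/
def nonwanderingSet (T : X → X) (A : X → ℝ) (Abar : ℝ) : Set X :=
  {x : X | ∀ ε : ℝ, 0 < ε → ∃ k : ℕ, 1 ≤ k ∧ ∃ y : X,
    dist x y < ε ∧ dist x (T^[k] y) < ε ∧
    |∑ j ∈ Finset.range k, (A (T^[j] y) - Abar)| < ε}

/-- `u` is a calibrated sub-action: `u x = min_{T y = x} [u y + A y - Abar]`,
the minimum being attained. -/
def IsCalibrated (T : X → X) (A : X → ℝ) (Abar : ℝ) (u : X → ℝ) : Prop :=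
  Continuous u ∧ ∀ x : X,
    (∀ y : X, T y = x → u x ≤ u y + A y - Abar) ∧
    (∃ y : X, T y = x ∧ u x = u y + A y - Abar)

/-- `S_A^ε(x, x', k)`: infimum of Birkhoff sums of `A - Abar` over orbit segments of
length `k` starting within `ε` of `x` and ending within `ε` of `x'`
(`sInf ∅ = ⊤` in `EReal`). -/
noncomputable def birkhoffInf (T : X → X) (A : X → ℝ) (Abar : ℝ) (ε : ℝ) (x x' : X)
    (k : ℕ) : EReal :=
  sInf {v : EReal | ∃ z : X, dist z x < ε ∧ dist (T^[k] z) x' < ε ∧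
    v = ((∑ j ∈ Finset.range k, (A (T^[j] z) - Abar) : ℝ) : EReal)}

/-- The Mañé potential `φ_A(x, x') = lim_{ε→0} inf_{k ≥ 1} S_A^ε(x, x', k)`;
since the quantity is nonincreasing in `ε`, the limit as `ε → 0` is the
supremum over `ε > 0`. -/
noncomputable def manePotential (T : X → X) (A : X → ℝ) (Abar : ℝ) (x x' : X) : EReal :=
  ⨆ ε : {e : ℝ // 0 < e}, ⨅ k : {n : ℕ // 1 ≤ n}, birkhoffInf T A Abar ε.1 x x' k.1

/-- The Peierls barrier `h_A(x, x') = lim_{ε→0} liminf_{k→∞} S_A^ε(x, x', k)`;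
since the quantity is nonincreasing in `ε`, the limit as `ε → 0` is the
supremum over `ε > 0`. -/
noncomputable def peierlsBarrier (T : X → X) (A : X → ℝ) (Abar : ℝ) (x x' : X) : EReal :=
  ⨆ ε : {e : ℝ // 0 < e},
    Filter.liminf (fun k : ℕ => birkhoffInf T A Abar ε.1 x x' k) Filter.atTop

/-- `C` is an irreducible component of `Ω(A)`: an equivalence class of the
relation `x ∼ x' ↔ h_A(x, x') + h_A(x', x) = 0` on `Ω(A)`. -/
def IsIrredComponent (T : X → X) (A : X → ℝ) (Abar : ℝ) (C : Set X) : Prop :=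
  ∃ x ∈ nonwanderingSet T A Abar, C = {y ∈ nonwanderingSet T A Abar |
    peierlsBarrier T A Abar x y + peierlsBarrier T A Abar y x = 0}

/-- The θ-Hölder norm `‖f‖_θ = sup |f| + sup_{x ≠ y} |f x - f y| / d(x,y)^θ`. -/
noncomputable def holderNorm (θ : ℝ) (f : X → ℝ) : ℝ :=
  (⨆ x : X, |f x|) +
    ⨆ p : {p : X × X // p.1 ≠ p.2}, |f p.1.1 - f p.1.2| / dist p.1.1 p.1.2 ^ θ

end GLT

/-! A sub-action telescopes along orbit segments, which gives `h_A(x, y) ≥ u y - u x`. The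
uniformly contracting inverse branches let one shadow an orbit segment ending near `y` by one
ending exactly at a prescribed point near `y`; Hölder continuity makes the Birkhoff sums along
the two segments differ by a geometric series, i.e. by as little as we like. Gluing two almost
optimal segments this way yields the triangle inequality for `h_A`. On a component
`h_A(x, x') + h_A(x', x) = 0`, which together with the lower bound forces
`h_A(x, x') = u x' - u x`, and two triangle inequalities through `x'` and `y'` then compare
the normalized barriers at `(x, y)` and `(x', y')`. -/

open Finset

theorem IsOpenMap.exists_uniform_near_preimage {X Y : Type*} [MetricSpace X] [CompactSpace X]
    [MetricSpace Y] {f : X → Y} (hfo : IsOpenMap f) (hf : Continuous f) {δ : ℝ}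
    (hδ : 0 < δ) :
    ∃ ρ > 0, ∀ x q, dist q (f x) < ρ → ∃ w, f w = q ∧ dist w x < δ := by
  -- `U` is an open neighbourhood of the graph of `f`; since the graph is compact, some uniform
  -- thickening of it still lies in `U`.
  set U : Set (X × Y) := ⋃ a, Metric.ball a (δ / 2) ×ˢ (f '' Metric.ball a (δ / 2))
  have hU : IsOpen U := isOpen_iUnion fun a => Metric.isOpen_ball.prod (hfo _ Metric.isOpen_ball)
  have hgraph : Set.range (fun x => (x, f x)) ⊆ U := by
    rintro _ ⟨x, rfl⟩
    exact Set.mem_iUnion.2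
      ⟨x, Metric.mem_ball_self (half_pos hδ), x, Metric.mem_ball_self (half_pos hδ), rfl⟩
  obtain ⟨ρ, hρ, hρU⟩ :=
    (isCompact_range (continuous_id.prodMk hf)).exists_thickening_subset_open hU hgraph
  refine ⟨ρ, hρ, fun x q hq => ?_⟩
  have hxq : (x, q) ∈ U :=
    hρU <| Metric.mem_thickening_iff.2
      ⟨(x, f x), ⟨x, rfl⟩, by simpa [Prod.dist_eq] using hq⟩
  obtain ⟨a, hxa, w, hwa, rfl⟩ := Set.mem_iUnion.1 hxq
  refine ⟨w, rfl, (dist_triangle_right w x a).trans_lt ?_⟩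
  linarith [Metric.mem_ball.1 hxa, Metric.mem_ball.1 hwa]

section PeierlsBarrier

variable {X : Type*} [MetricSpace X] {T : X → X} {A : X → ℝ} {Abar : ℝ}

theorem IsExpandingTransitive.exists_inverse_branch [CompactSpace X]
    (hT : IsExpandingTransitive T) :
    ∃ lam : ℝ, 0 < lam ∧ lam < 1 ∧ ∃ ρ > 0, ∀ x q, dist q (T x) < ρ →
      ∃ w, T w = q ∧ dist w x ≤ lam * dist q (T x) := by
  obtain ⟨lam, hlam0, hlam1, δ, hδ, hcontr⟩ := hT.contracting
  obtain ⟨ρ, hρ, hpre⟩ := hT.isOpenMap.exists_uniform_near_preimage hT.cont hδ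
  refine ⟨lam, hlam0, hlam1, ρ, hρ, fun x q hq => ?_⟩
  obtain ⟨w, rfl, hw⟩ := hpre x q hq
  exact ⟨w, rfl, hcontr w x hw.le⟩

theorem exists_iterate_eq_forall_dist_iterate_le {lam ρ : ℝ} (hlam0 : 0 ≤ lam)
    (hlam1 : lam ≤ 1)
    (hpull : ∀ x q, dist q (T x) < ρ → ∃ w, T w = q ∧ dist w x ≤ lam * dist q (T x))
    (k : ℕ) (p q : X) (hq : dist q (T^[k] p) < ρ) :
    ∃ w, T^[k] w = q ∧
      ∀ j ≤ k, dist (T^[j] w) (T^[j] p) ≤ lam ^ (k - j) * dist q (T^[k] p) := by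
  induction k generalizing p with
  | zero => exact ⟨q, rfl, fun j hj => by simp [Nat.le_zero.1 hj]⟩
  | succ k ih =>
    rw [Function.iterate_succ_apply] at hq ⊢
    obtain ⟨w', rfl, hw'⟩ := ih (T p) hq
    have hw'0 : dist w' (T p) ≤ lam ^ k * dist (T^[k] w') (T^[k] (T p)) := by
      simpa using hw' 0 k.zero_le
    have hw'0' : dist w' (T p) ≤ dist (T^[k] w') (T^[k] (T p)) :=
      hw'0.trans (mul_le_of_le_one_left dist_nonneg (pow_le_one₀ hlam0 hlam1))
    obtain ⟨w, rfl, hw⟩ := hpull p w' (hw'0'.trans_lt hq)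
    refine ⟨w, rfl, ?_⟩
    rintro (_ | j) hj
    · calc dist w p ≤ lam * dist (T w) (T p) := hw
        _ ≤ lam * (lam ^ k * dist (T^[k] (T w)) (T^[k] (T p))) := by gcongr
        _ = _ := by rw [Nat.sub_zero, pow_succ]; ring
    · simpa only [Function.iterate_succ_apply, Nat.add_sub_add_right] using hw' j (by omega)

theorem abs_birkhoffSum_sub_le_of_forall_dist_le {g : X → ℝ} {C θ lam D : ℝ} {k : ℕ}
    {w p : X} (hC : 0 ≤ C) (hθ : 0 < θ) (hlam0 : 0 ≤ lam) (hlam1 : lam < 1) (hD : 0 ≤ D)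
    (hg : ∀ x y, |g x - g y| ≤ C * dist x y ^ θ)
    (hdist : ∀ j < k, dist (T^[j] w) (T^[j] p) ≤ lam ^ (k - j) * D) :
    |birkhoffSum T g k w - birkhoffSum T g k p| ≤ C * D ^ θ / (1 - lam ^ θ) := by
  set μ := lam ^ θ
  have hμ0 : 0 ≤ μ := Real.rpow_nonneg hlam0 θ
  have hμ1 : μ < 1 := Real.rpow_lt_one hlam0 hlam1 hθ
  have hterm : ∀ j < k, |g (T^[j] w) - g (T^[j] p)| ≤ C * D ^ θ * μ ^ (k - 1 - j) := by
    intro j hj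
    calc |g (T^[j] w) - g (T^[j] p)| ≤ C * dist (T^[j] w) (T^[j] p) ^ θ := hg _ _
      _ ≤ C * (lam ^ (k - j) * D) ^ θ := by gcongr; exact hdist j hj
      _ = C * D ^ θ * μ ^ (k - j) := by
        rw [Real.mul_rpow (by positivity) hD, ← Real.rpow_pow_comm hlam0]; ring
      _ ≤ C * D ^ θ * μ ^ (k - 1 - j) := by
        gcongr C * D ^ θ * ?_
        exact pow_le_pow_of_le_one hμ0 hμ1.le (by omega)
  calc |birkhoffSum T g k w - birkhoffSum T g k p|
      = |∑ j ∈ range k, (g (T^[j] w) - g (T^[j] p))| := by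
        rw [birkhoffSum, birkhoffSum, sum_sub_distrib]
    _ ≤ ∑ j ∈ range k, C * D ^ θ * μ ^ (k - 1 - j) :=
        (abs_sum_le_sum_abs _ _).trans (sum_le_sum fun j hj => hterm j (mem_range.1 hj))
    _ = C * D ^ θ * ∑ j ∈ Ico 0 k, μ ^ j := by
        rw [← mul_sum, sum_range_reflect (μ ^ ·) k, range_eq_Ico]
    _ ≤ C * D ^ θ * (μ ^ 0 / (1 - μ)) := by
        gcongr; exact geom_sum_Ico_le_of_lt_one hμ0 hμ1
    _ = C * D ^ θ / (1 - μ) := by ring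

theorem IsExpandingTransitive.exists_shadow_birkhoffSum_le [CompactSpace X]
    (hT : IsExpandingTransitive T) {θ : ℝ} (hθ : 0 < θ) {g : X → ℝ}
    (hg : IsThetaHolder θ g) {γ : ℝ} (hγ : 0 < γ) :
    ∃ η > 0, ∀ (k : ℕ) (p q : X), dist q (T^[k] p) < η → ∃ w, T^[k] w = q ∧
      dist w p ≤ dist q (T^[k] p) ∧ birkhoffSum T g k w ≤ birkhoffSum T g k p + γ := by
  obtain ⟨C, hC, hgC⟩ := hg
  obtain ⟨lam, hlam0, hlam1, ρ, hρ, hpull⟩ := hT.exists_inverse_branch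
  have hcont : ContinuousAt (fun D : ℝ => C * D ^ θ / (1 - lam ^ θ)) 0 :=
    (continuousAt_const.mul (Real.continuousAt_rpow_const 0 θ (.inr hθ.le))).div_const _
  have hsmall : ∀ᶠ D in 𝓝 0, C * D ^ θ / (1 - lam ^ θ) < γ :=
    hcont.eventually (gt_mem_nhds (by simpa [Real.zero_rpow hθ.ne'] using hγ))
  obtain ⟨η, hη, hηγ⟩ := Metric.eventually_nhds_iff.1 hsmall
  refine ⟨min η ρ, lt_min hη hρ, fun k p q hq => ?_⟩
  set D := dist q (T^[k] p)
  obtain ⟨w, hw, hwp⟩ := exists_iterate_eq_forall_dist_iterate_le hlam0.le hlam1.le hpull k p q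
    (hq.trans_le (min_le_right _ _))
  have hw0 : dist w p ≤ D := by
    simpa using (hwp 0 k.zero_le).trans
      (mul_le_of_le_one_left dist_nonneg (pow_le_one₀ hlam0.le hlam1.le))
  have hsum := abs_birkhoffSum_sub_le_of_forall_dist_le hC hθ hlam0.le hlam1 dist_nonneg hgC
    fun j hj => hwp j hj.le
  have hD : C * D ^ θ / (1 - lam ^ θ) < γ :=
    hηγ <| by
      rw [Real.dist_eq, sub_zero, abs_of_nonneg dist_nonneg]
      exact hq.trans_le (min_le_left _ _)
  exact ⟨w, hw, hw0, by linarith [(abs_le.1 hsum).2]⟩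

theorem birkhoffInf_le {ε : ℝ} {x y z : X} {k : ℕ} (hz : dist z x < ε)
    (hkz : dist (T^[k] z) y < ε) :
    birkhoffInf T A Abar ε x y k ≤ (birkhoffSum T (A · - Abar) k z : ℝ) :=
  sInf_le ⟨z, hz, hkz, rfl⟩

theorem exists_birkhoffSum_lt_of_birkhoffInf_lt {ε c : ℝ} {x y : X} {k : ℕ}
    (h : birkhoffInf T A Abar ε x y k < c) :
    ∃ z, dist z x < ε ∧ dist (T^[k] z) y < ε ∧ birkhoffSum T (A · - Abar) k z < c := by
  obtain ⟨_, ⟨z, hz, hkz, rfl⟩, hlt⟩ := sInf_lt_iff.1 h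
  exact ⟨z, hz, hkz, EReal.coe_lt_coe_iff.1 hlt⟩

theorem liminf_birkhoffInf_le_peierlsBarrier {ε : ℝ} (hε : 0 < ε) (x y : X) :
    liminf (fun k => birkhoffInf T A Abar ε x y k) atTop ≤ peierlsBarrier T A Abar x y :=
  le_iSup (fun e : {e : ℝ // 0 < e} => liminf (fun k => birkhoffInf T A Abar e.1 x y k) atTop)
    ⟨ε, hε⟩

theorem peierlsBarrier_le_of_lt_of_lt [CompactSpace X] (hT : IsExpandingTransitive T) {θ : ℝ}
    (hθ : 0 < θ) (hA : IsThetaHolder θ A) {x y z : X} {c₁ c₂ d : ℝ}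
    (hxy : peierlsBarrier T A Abar x y < c₁) (hyz : peierlsBarrier T A Abar y z < c₂)
    (hd : c₁ + c₂ < d) :
    peierlsBarrier T A Abar x z ≤ d := by
  have hg : IsThetaHolder θ (A · - Abar) := by
    obtain ⟨C, hC, hAC⟩ := hA
    exact ⟨C, hC, fun x y => by simpa using hAC x y⟩
  obtain ⟨η, hη, hshadow⟩ := hT.exists_shadow_birkhoffSum_le hθ hg (sub_pos.2 hd)
  refine iSup_le fun ⟨ε, hε⟩ => ?_
  set ε' := min (ε / 3) (η / 2)
  have hε' : 0 < ε' := lt_min (by positivity) (by positivity)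
  have hε'ε : ε' ≤ ε / 3 := min_le_left _ _
  have hε'η : ε' ≤ η / 2 := min_le_right _ _
  have hfreq : ∃ᶠ k in atTop, birkhoffInf T A Abar ε' x y k < c₁ :=
    frequently_lt_of_liminf_lt (by isBoundedDefault)
      ((liminf_birkhoffInf_le_peierlsBarrier hε' x y).trans_lt hxy)
  obtain ⟨k₂, hk₂⟩ := (frequently_lt_of_liminf_lt (by isBoundedDefault)
    ((liminf_birkhoffInf_le_peierlsBarrier hε' y z).trans_lt hyz)).exists
  obtain ⟨z₂, hz₂y, hz₂z, hS₂⟩ := exists_birkhoffSum_lt_of_birkhoffInf_lt hk₂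
  refine liminf_le_of_frequently_le'
    ((tendsto_add_atTop_nat k₂).frequently (hfreq.mono fun k₁ hk₁ => ?_))
  obtain ⟨z₁, hz₁x, hz₁y, hS₁⟩ := exists_birkhoffSum_lt_of_birkhoffInf_lt hk₁
  have hgap : dist z₂ (T^[k₁] z₁) < η := by
    linarith [dist_triangle_right z₂ (T^[k₁] z₁) y]
  obtain ⟨w, hw, hwz₁, hSw⟩ := hshadow k₁ z₁ z₂ hgap
  have hwx : dist w x < ε := by
    linarith [dist_triangle w z₁ x, dist_triangle_right z₂ (T^[k₁] z₁) y]
  have hwz : dist (T^[k₁ + k₂] w) z < ε := by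
    rw [add_comm, Function.iterate_add_apply, hw]; linarith
  calc birkhoffInf T A Abar ε x z (k₁ + k₂)
      ≤ (birkhoffSum T (A · - Abar) (k₁ + k₂) w : ℝ) := birkhoffInf_le hwx hwz
    _ ≤ d := by
      rw [birkhoffSum_add, hw]
      exact_mod_cast (by linarith : _ ≤ d)

theorem peierlsBarrier_le_add [CompactSpace X] (hT : IsExpandingTransitive T) {θ : ℝ}
    (hθ : 0 < θ) (hA : IsThetaHolder θ A) {x y z : X}
    (hxy : peierlsBarrier T A Abar x y ≠ ⊥) (hyz : peierlsBarrier T A Abar y z ≠ ⊥) :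
    peierlsBarrier T A Abar x z ≤ peierlsBarrier T A Abar x y + peierlsBarrier T A Abar y z :=
  EReal.le_add_of_forall_gt (.inl hxy) (.inr hyz) fun a ha b hb => by
    obtain ⟨c₁, hc₁, hc₁a⟩ := EReal.exists_between_coe_real ha
    obtain ⟨c₂, hc₂, hc₂b⟩ := EReal.exists_between_coe_real hb
    obtain ⟨d, hd, hdab⟩ := EReal.exists_between_coe_real (EReal.add_lt_add hc₁a hc₂b)
    exact (peierlsBarrier_le_of_lt_of_lt hT hθ hA hc₁ hc₂ (by exact_mod_cast hd)).trans hdab.le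

namespace IsSubaction

variable {u : X → ℝ}

theorem sub_le_birkhoffSum (hu : IsSubaction T A Abar u) (k : ℕ) (z : X) :
    u (T^[k] z) - u z ≤ birkhoffSum T (A · - Abar) k z := by
  induction k with
  | zero => simp
  | succ k ih =>
    rw [birkhoffSum_succ, Function.iterate_succ_apply']
    linarith [hu.2 (T^[k] z)]

theorem coe_sub_le_peierlsBarrier [CompactSpace X] (hu : IsSubaction T A Abar u) (x y : X) :
    ((u y - u x : ℝ) : EReal) ≤ peierlsBarrier T A Abar x y := by
  refine le_of_forall_lt_imp_le_of_dense fun e he => ?_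
  obtain ⟨c, hec, hc⟩ := EReal.exists_between_coe_real he
  obtain ⟨ε, hε, hεu⟩ := Metric.uniformContinuous_iff.1
    (CompactSpace.uniformContinuous_of_continuous hu.1) _
    (half_pos (sub_pos.2 (EReal.coe_lt_coe_iff.1 hc)))
  refine hec.le.trans (le_trans ?_ (liminf_birkhoffInf_le_peierlsBarrier hε x y))
  refine le_liminf_of_le (by isBoundedDefault) (Eventually.of_forall fun k => le_sInf ?_)
  rintro _ ⟨z, hz, hkz, rfl⟩
  have hux := hεu hz
  have huy := hεu hkz
  rw [Real.dist_eq, abs_lt] at hux huy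
  exact EReal.coe_le_coe_iff.2
    (show c ≤ birkhoffSum T (A · - Abar) k z by linarith [hu.sub_le_birkhoffSum k z])

theorem peierlsBarrier_ne_bot [CompactSpace X] (hu : IsSubaction T A Abar u) (x y : X) :
    peierlsBarrier T A Abar x y ≠ ⊥ :=
  ne_bot_of_le_ne_bot (EReal.coe_ne_bot _) (hu.coe_sub_le_peierlsBarrier x y)

theorem peierlsBarrier_eq_of_add_eq_zero [CompactSpace X] (hu : IsSubaction T A Abar u)
    {x y : X} (h : peierlsBarrier T A Abar x y + peierlsBarrier T A Abar y x = 0) :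
    peierlsBarrier T A Abar x y = ((u y - u x : ℝ) : EReal) := by
  refine le_antisymm (not_lt.1 fun hlt => ?_) (hu.coe_sub_le_peierlsBarrier x y)
  have := EReal.add_lt_add_of_lt_of_le hlt (hu.coe_sub_le_peierlsBarrier y x)
    (EReal.coe_ne_bot _) fun htop => ?_
  · rw [h, ← EReal.coe_add, sub_add_sub_cancel, sub_self, EReal.coe_zero] at this
    exact lt_irrefl _ this
  · rw [htop, EReal.add_top_of_ne_bot (hu.peierlsBarrier_ne_bot x y)] at h
    exact EReal.top_ne_zero h

theorem peierlsBarrier_eq_of_mem_irredComponent [CompactSpace X] (hu : IsSubaction T A Abar u)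
    (hT : IsExpandingTransitive T) {θ : ℝ} (hθ : 0 < θ) (hA : IsThetaHolder θ A) {C : Set X}
    (hC : IsIrredComponent T A Abar C) {x y : X} (hx : x ∈ C) (hy : y ∈ C) :
    peierlsBarrier T A Abar x y = ((u y - u x : ℝ) : EReal) := by
  obtain ⟨x₀, -, rfl⟩ := hC
  refine le_antisymm ?_ (hu.coe_sub_le_peierlsBarrier x y)
  calc peierlsBarrier T A Abar x y
      ≤ peierlsBarrier T A Abar x x₀ + peierlsBarrier T A Abar x₀ y :=
        peierlsBarrier_le_add hT hθ hA (hu.peierlsBarrier_ne_bot x x₀)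
          (hu.peierlsBarrier_ne_bot x₀ y)
    _ = ((u x₀ - u x + (u y - u x₀) : ℝ) : EReal) := by
        rw [hu.peierlsBarrier_eq_of_add_eq_zero ((add_comm _ _).trans hx.2),
          hu.peierlsBarrier_eq_of_add_eq_zero hy.2, EReal.coe_add]
    _ = ((u y - u x : ℝ) : EReal) := by ring_nf

theorem peierlsBarrier_add_le_of_eq [CompactSpace X] (hu : IsSubaction T A Abar u)
    (hT : IsExpandingTransitive T) {θ : ℝ} (hθ : 0 < θ) (hA : IsThetaHolder θ A)
    {p p' q q' : X}
    (hp : peierlsBarrier T A Abar p p' = ((u p' - u p : ℝ) : EReal))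
    (hq : peierlsBarrier T A Abar q' q = ((u q - u q' : ℝ) : EReal)) :
    peierlsBarrier T A Abar p q + ((u p - u q : ℝ) : EReal) ≤
      peierlsBarrier T A Abar p' q' + ((u p' - u q' : ℝ) : EReal) := by
  have htri := peierlsBarrier_le_add hT hθ hA (hu.peierlsBarrier_ne_bot p p')
    (hu.peierlsBarrier_ne_bot p' q)
  have htri' := peierlsBarrier_le_add hT hθ hA (hu.peierlsBarrier_ne_bot p' q')
    (hu.peierlsBarrier_ne_bot q' q)
  rw [hp] at htri
  rw [hq] at htri'
  calc peierlsBarrier T A Abar p q + ((u p - u q : ℝ) : EReal)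
      ≤ ((u p' - u p : ℝ) : EReal) +
          (peierlsBarrier T A Abar p' q' + ((u q - u q' : ℝ) : EReal)) +
          ((u p - u q : ℝ) : EReal) := by gcongr; exact htri.trans (by gcongr)
    _ = peierlsBarrier T A Abar p' q' +
          ((u p' - u p + (u q - u q') + (u p - u q) : ℝ) : EReal) := by
        rw [EReal.coe_add, EReal.coe_add]; abel
    _ = peierlsBarrier T A Abar p' q' + ((u p' - u q' : ℝ) : EReal) := by ring_nf

end IsSubaction

end PeierlsBarrier

theorem normalized_peierls_constant_on_components_general {X : Type*} [MetricSpace X] [CompactSpace X]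
    (T : X → X) (hT : IsExpandingTransitive T)
    (θ : ℝ) (hθ0 : 0 < θ)
    (A : X → ℝ) (hA : IsThetaHolder θ A)
    (Abar : ℝ)
    (r : ℕ) (C : Fin r → Set X)
    (hC : ∀ i, IsIrredComponent T A Abar (C i))
    (u : X → ℝ) (hu : IsSubaction T A Abar u) :
    ∀ i j : Fin r, ∀ x ∈ C i, ∀ x' ∈ C i, ∀ y ∈ C j, ∀ y' ∈ C j,
      peierlsBarrier T A Abar x y + ((u x - u y : ℝ) : EReal) =
        peierlsBarrier T A Abar x' y' + ((u x' - u y' : ℝ) : EReal) := by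
  intro i j x hx x' hx' y hy y' hy'
  have hbarrier {k : Fin r} {p q : X} (hp : p ∈ C k) (hq : q ∈ C k) :=
    hu.peierlsBarrier_eq_of_mem_irredComponent hT hθ0 hA (hC k) hp hq
  exact le_antisymm
    (hu.peierlsBarrier_add_le_of_eq hT hθ0 hA (hbarrier hx hx') (hbarrier hy' hy))
    (hu.peierlsBarrier_add_le_of_eq hT hθ0 hA (hbarrier hx' hx) (hbarrier hy hy'))

/-- for a continuous sub-action `u`, the normalized barrier
`(x, y) ↦ h_A(x, y) - u y + u x` is constant on `C i × C j`. -/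
theorem normalized_peierls_constant_on_components {X : Type*} [MetricSpace X] [CompactSpace X] [Nonempty X]
    [MeasurableSpace X] [BorelSpace X]
    (T : X → X) (hT : IsExpandingTransitive T)
    (θ : ℝ) (hθ0 : 0 < θ) (hθ1 : θ ≤ 1)
    (A : X → ℝ) (hA : IsThetaHolder θ A)
    (Abar : ℝ) (hAbar : IsErgMinValue T A Abar)
    (r : ℕ) (hr : 0 < r) (C : Fin r → Set X)
    (hC : ∀ i, IsIrredComponent T A Abar (C i))
    (hdisj : ∀ i j, i ≠ j → Disjoint (C i) (C j))
    (hcover : nonwanderingSet T A Abar = ⋃ i, C i)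
    (xp : Fin r → X) (hxp : ∀ i, xp i ∈ C i)
    (u : X → ℝ) (hu : IsSubaction T A Abar u) :
    ∀ i j : Fin r, ∀ x ∈ C i, ∀ x' ∈ C i, ∀ y ∈ C j, ∀ y' ∈ C j,
      peierlsBarrier T A Abar x y + ((u x - u y : ℝ) : EReal) =
        peierlsBarrier T A Abar x' y' + ((u x' - u y' : ℝ) : EReal) :=
  normalized_peierls_constant_on_components_general T hT θ hθ0 A hA Abar r C hC u hu
end

section
/- Let A : X → ℝ be θ-Hölder for some θ ∈ (0,1] and assume Ω(A) is the disjoint union of finitely many irreducible components C_1, …, C_r. If u is a continuous separating sub-action for A (i.e. M_A(u) = Ω(A)), then for all i ≠ j and all points x ∈ C_i, y ∈ C_j, one has the strict inequality h_A(x, y) > u(y) − u(x). -/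
open MeasureTheory Filter Topology

section Aux

open Filter

variable {X : Type*} [MetricSpace X] [CompactSpace X]

/-- Auxiliary predicate: there are orbit segments of arbitrarily large length from
arbitrarily near `x` to arbitrarily near `y` with Birkhoff sum `< b`.  It captures
`peierlsBarrier T A Abar x y ≤ b` in a workable form. -/
def HLE (T : X → X) (A : X → ℝ) (Abar : ℝ) (x y : X) (b : ℝ) : Prop :=
  ∀ ε : ℝ, 0 < ε → ∀ n : ℕ, ∃ k, n ≤ k ∧ ∃ z : X,
    dist z x < ε ∧ dist (T^[k] z) y < ε ∧
    (∑ j ∈ Finset.range k, (A (T^[j] z) - Abar)) < b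

lemma peierls_le_of_HLE {T : X → X} {A : X → ℝ} {Abar : ℝ} {x y : X} {b : ℝ}
    (h : HLE T A Abar x y b) : peierlsBarrier T A Abar x y ≤ (b : EReal) := by
  rw [peierlsBarrier]
  apply iSup_le
  rintro ⟨ε, hε⟩
  apply Filter.liminf_le_of_frequently_le'
  rw [Filter.frequently_atTop]
  intro n
  obtain ⟨k, hk, z, h1, h2, h3⟩ := h ε hε n
  refine ⟨k, hk, ?_⟩
  have hmem : ((∑ j ∈ Finset.range k, (A (T^[j] z) - Abar) : ℝ) : EReal) ∈
      {v : EReal | ∃ z : X, dist z x < ε ∧ dist (T^[k] z) y < ε ∧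
        v = ((∑ j ∈ Finset.range k, (A (T^[j] z) - Abar) : ℝ) : EReal)} := ⟨z, h1, h2, rfl⟩
  exact le_trans (sInf_le hmem) (by exact_mod_cast h3.le)

lemma HLE_of_peierls_lt {T : X → X} {A : X → ℝ} {Abar : ℝ} {x y : X} {b : ℝ}
    (h : peierlsBarrier T A Abar x y < (b : EReal)) : HLE T A Abar x y b := by
  intro ε hε n
  have hlim : Filter.liminf (fun k : ℕ => birkhoffInf T A Abar ε x y k) Filter.atTop
      < (b : EReal) := by
    refine lt_of_le_of_lt ?_ h
    rw [peierlsBarrier]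
    exact le_iSup (fun e : {e : ℝ // 0 < e} =>
      Filter.liminf (fun k : ℕ => birkhoffInf T A Abar e.1 x y k) Filter.atTop) ⟨ε, hε⟩
  have hfreq := Filter.frequently_lt_of_liminf_lt (by isBoundedDefault) hlim
  rw [Filter.frequently_atTop] at hfreq
  obtain ⟨k, hk, hklt⟩ := hfreq n
  rw [birkhoffInf] at hklt
  obtain ⟨v, ⟨z, hz1, hz2, rfl⟩, hv⟩ := sInf_lt_iff.mp hklt
  exact ⟨k, hk, z, hz1, hz2, by exact_mod_cast hv⟩

lemma EReal.le_coe_of_forall_add {h : EReal} {b : ℝ}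
    (H : ∀ σ : ℝ, 0 < σ → h ≤ ((b + σ : ℝ) : EReal)) : h ≤ (b : EReal) := by
  by_contra hc
  push_neg at hc
  obtain ⟨m, hm1, hm2⟩ := EReal.exists_between_coe_real hc
  have h1 : b < m := by exact_mod_cast hm1
  have := H (m - b) (by linarith)
  rw [show b + (m - b) = m by ring] at this
  exact absurd (lt_of_le_of_lt this hm2) (lt_irrefl _)

lemma EReal.coe_le_of_forall_sub {h : EReal} {b : ℝ}
    (H : ∀ σ : ℝ, 0 < σ → ((b - σ : ℝ) : EReal) ≤ h) : (b : EReal) ≤ h := by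
  by_contra hc
  push_neg at hc
  obtain ⟨m, hm1, hm2⟩ := EReal.exists_between_coe_real hc
  have h1 : m < b := by exact_mod_cast hm2
  have := H (b - m) (by linarith)
  rw [show b - (b - m) = m by ring] at this
  exact absurd (lt_of_lt_of_le hm1 this) (lt_irrefl _)

/-- Uniform-continuity modulus for a real-valued continuous function on a compact space. -/
lemma unif_mod {g : X → ℝ} (hg : Continuous g) :
    ∀ s : ℝ, 0 < s → ∃ d : ℝ, 0 < d ∧ ∀ a b : X, dist a b < d → |g a - g b| < s := by
  intro s hs
  have h := CompactSpace.uniformContinuous_of_continuous hg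
  rw [Metric.uniformContinuous_iff] at h
  obtain ⟨d, hd, hdd⟩ := h s hs
  exact ⟨d, hd, fun a b hab => by rw [← Real.dist_eq]; exact hdd hab⟩

/-- Uniform-continuity modulus for a continuous self-map of a compact space. -/
lemma unif_modT {T : X → X} (hg : Continuous T) :
    ∀ s : ℝ, 0 < s → ∃ d : ℝ, 0 < d ∧ ∀ a b : X, dist a b < d → dist (T a) (T b) < s := by
  intro s hs
  have h := CompactSpace.uniformContinuous_of_continuous hg
  rw [Metric.uniformContinuous_iff] at h
  obtain ⟨d, hd, hdd⟩ := h s hs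
  exact ⟨d, hd, fun a b hab => hdd hab⟩

lemma holder_continuous {θ : ℝ} (hθ0 : 0 < θ) {A : X → ℝ} (hA : IsThetaHolder θ A) :
    Continuous A := by
  obtain ⟨Ca, hC0, hC⟩ := hA
  rw [Metric.continuous_iff]
  intro b ε hε
  refine ⟨(ε / (Ca + 1)) ^ (1/θ), Real.rpow_pos_of_pos (by positivity) _, fun a hab => ?_⟩
  rw [Real.dist_eq]
  have h1 : dist a b ^ θ ≤ ((ε / (Ca + 1)) ^ (1/θ)) ^ θ :=
    Real.rpow_le_rpow dist_nonneg hab.le hθ0.le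
  have h2 : ((ε / (Ca + 1)) ^ (1/θ) : ℝ) ^ θ = ε / (Ca + 1) := by
    rw [← Real.rpow_mul (by positivity), one_div, inv_mul_cancel₀ hθ0.ne', Real.rpow_one]
  have h3 : Ca * (ε / (Ca + 1)) < ε := by
    rw [mul_div_assoc', div_lt_iff₀ (by positivity)]
    nlinarith
  calc |A a - A b| ≤ Ca * dist a b ^ θ := hC a b
    _ ≤ Ca * (ε / (Ca + 1)) := by
        rw [← h2]; exact mul_le_mul_of_nonneg_left h1 hC0
    _ < ε := h3

/-- Birkhoff sums of `A - Abar` decompose as the sum of the nonnegative defect plus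
the telescoping `u`-increment. -/
lemma sum_defect_eq (T : X → X) (A : X → ℝ) (Abar : ℝ) (u : X → ℝ) (z : X) (k : ℕ) :
    (∑ j ∈ Finset.range k, (A (T^[j] z) - Abar)) =
      (∑ j ∈ Finset.range k, (A (T^[j] z) - Abar - (u (T (T^[j] z)) - u (T^[j] z))))
        + (u (T^[k] z) - u z) := by
  induction k with
  | zero => simp
  | succ n ih =>
      rw [Finset.sum_range_succ, Finset.sum_range_succ, ih, Function.iterate_succ_apply']
      ring

/-- Lower bound: the Peierls barrier dominates the coboundary differential of any sub-action. -/
lemma peierls_ge {T : X → X} {A : X → ℝ} {Abar : ℝ} {u : X → ℝ}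
    (hu : IsSubaction T A Abar u) (x y : X) :
    ((u y - u x : ℝ) : EReal) ≤ peierlsBarrier T A Abar x y := by
  apply EReal.coe_le_of_forall_sub
  intro σ hσ
  obtain ⟨d, hd, hdd⟩ := unif_mod hu.1 (σ/2) (by linarith)
  have key : ∀ k : ℕ, ((u y - u x - σ : ℝ) : EReal) ≤ birkhoffInf T A Abar d x y k := by
    intro k
    rw [birkhoffInf]
    apply le_sInf
    rintro v ⟨z, hz1, hz2, rfl⟩
    rw [EReal.coe_le_coe_iff]
    have h1 : |u z - u x| < σ/2 := hdd z x hz1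
    have h2 : |u (T^[k] z) - u y| < σ/2 := hdd _ y hz2
    have h3 := sum_defect_eq T A Abar u z k
    have h4 : 0 ≤ ∑ j ∈ Finset.range k,
        (A (T^[j] z) - Abar - (u (T (T^[j] z)) - u (T^[j] z))) := by
      apply Finset.sum_nonneg
      intro j _
      have := hu.2 (T^[j] z)
      linarith
    have h5 := abs_lt.mp h1
    have h6 := abs_lt.mp h2
    linarith
  rw [peierlsBarrier]
  refine le_iSup_of_le ⟨d, hd⟩ ?_
  exact Filter.le_liminf_of_le (by isBoundedDefault) (Filter.Eventually.of_forall key)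

/-- The non-wandering set is closed. -/
lemma omega_closed (T : X → X) (A : X → ℝ) (Abar : ℝ) :
    IsClosed (nonwanderingSet T A Abar) := by
  rw [← isOpen_compl_iff]
  rw [Metric.isOpen_iff]
  intro x hx
  rw [Set.mem_compl_iff, nonwanderingSet, Set.mem_setOf_eq] at hx
  push_neg at hx
  obtain ⟨ε, hε, hprop⟩ := hx
  refine ⟨ε/3, by linarith, fun w hw => ?_⟩
  rw [Metric.mem_ball] at hw
  rw [Set.mem_compl_iff, nonwanderingSet, Set.mem_setOf_eq]
  intro hcon
  obtain ⟨k, hk1, y, hy1, hy2, hy3⟩ := hcon (ε/3) (by linarith)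
  have h1 : dist x y < ε := by
    have := dist_triangle x w y
    rw [dist_comm x w] at *
    linarith [dist_comm w x ▸ hw]
  have h2 : dist x (T^[k] y) < ε := by
    have := dist_triangle x w (T^[k] y)
    have hxw : dist x w < ε/3 := by rw [dist_comm]; exact hw
    linarith
  have := hprop k hk1 y h1 h2
  linarith

/-- The non-wandering set is forward invariant. -/
lemma omega_mapsTo {T : X → X} {A : X → ℝ} {Abar : ℝ}
    (hTc : Continuous T) (hAc : Continuous A) {w : X}
    (hw : w ∈ nonwanderingSet T A Abar) : T w ∈ nonwanderingSet T A Abar := by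
  intro ε hε
  obtain ⟨dT, hdT, hTT⟩ := unif_modT hTc ε hε
  obtain ⟨dA, hdA, hAA⟩ := unif_mod hAc (ε/4) (by linarith)
  set ε₁ := min (ε/2) (min dT dA) with hε₁def
  have hε₁ : 0 < ε₁ := by
    apply lt_min (by linarith) (lt_min hdT hdA)
  have hε₁T : ε₁ ≤ dT := le_trans (min_le_right _ _) (min_le_left _ _)
  have hε₁A : ε₁ ≤ dA := le_trans (min_le_right _ _) (min_le_right _ _)
  have hε₁2 : ε₁ ≤ ε/2 := min_le_left _ _
  obtain ⟨k, hk, y, h1, h2, h3⟩ := hw ε₁ hε₁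
  refine ⟨k, hk, T y, hTT _ _ (lt_of_lt_of_le h1 hε₁T), ?_, ?_⟩
  · have : T^[k] (T y) = T (T^[k] y) := by
      rw [← Function.iterate_succ_apply, Function.iterate_succ_apply']
    rw [this]
    exact hTT _ _ (lt_of_lt_of_le h2 hε₁T)
  · have hsum : (∑ j ∈ Finset.range k, (A (T^[j] (T y)) - Abar)) =
        (∑ j ∈ Finset.range k, (A (T^[j] y) - Abar)) + (A (T^[k] y) - A y) := by
      have e1 : ∀ j, A (T^[j] (T y)) = A (T^[j+1] y) := by
        intro j; rw [Function.iterate_succ_apply]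
      calc (∑ j ∈ Finset.range k, (A (T^[j] (T y)) - Abar))
          = (∑ j ∈ Finset.range k, (A (T^[j+1] y) - Abar)) := by
            apply Finset.sum_congr rfl; intro j _; rw [e1]
        _ = (∑ j ∈ Finset.range (k+1), (A (T^[j] y) - Abar)) - (A (T^[0] y) - Abar) := by
            rw [Finset.sum_range_succ']; ring
        _ = (∑ j ∈ Finset.range k, (A (T^[j] y) - Abar)) + (A (T^[k] y) - A y) := by
            rw [Finset.sum_range_succ, Function.iterate_zero_apply]; ring
    rw [hsum]
    have hA1 : |A (T^[k] y) - A w| < ε/4 := by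
      have : dist (T^[k] y) w < dA := by
        rw [dist_comm]; exact lt_of_lt_of_le h2 hε₁A
      exact hAA _ _ this
    have hA2 : |A w - A y| < ε/4 := hAA _ _ (lt_of_lt_of_le h1 hε₁A)
    have h3' := abs_lt.mp h3
    have hA1' := abs_lt.mp hA1
    have hA2' := abs_lt.mp hA2
    rw [abs_lt]
    constructor <;> [nlinarith [hε₁2]; nlinarith [hε₁2]]

/-- Extending an orbit segment by one step at the end. -/
lemma HLE_shiftA {T : X → X} {A : X → ℝ} {Abar : ℝ}
    (hTc : Continuous T) (hAc : Continuous A) {x w : X} {b τ : ℝ} (hτ : 0 < τ)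
    (H : HLE T A Abar x w b) : HLE T A Abar x (T w) (b + (A w - Abar) + τ) := by
  intro ε hε n
  obtain ⟨dT, hdT, hTT⟩ := unif_modT hTc ε hε
  obtain ⟨dA, hdA, hAA⟩ := unif_mod hAc τ hτ
  set ε₁ := min ε (min dT dA) with hε₁def
  have hε₁ : 0 < ε₁ := lt_min hε (lt_min hdT hdA)
  obtain ⟨k, hk, z, h1, h2, h3⟩ := H ε₁ hε₁ n
  refine ⟨k+1, le_trans hk (Nat.le_succ k), z,
    lt_of_lt_of_le h1 (min_le_left _ _), ?_, ?_⟩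
  · rw [Function.iterate_succ_apply']
    exact hTT _ _ (lt_of_lt_of_le h2 (le_trans (min_le_right _ _) (min_le_left _ _)))
  · rw [Finset.sum_range_succ]
    have hA1 : |A (T^[k] z) - A w| < τ :=
      hAA _ _ (lt_of_lt_of_le h2 (le_trans (min_le_right _ _) (min_le_right _ _)))
    have := abs_lt.mp hA1
    linarith

/-- Shortening an orbit segment by one step at the start. -/
lemma HLE_shiftB {T : X → X} {A : X → ℝ} {Abar : ℝ}
    (hTc : Continuous T) (hAc : Continuous A) {w x : X} {b τ : ℝ} (hτ : 0 < τ)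
    (H : HLE T A Abar w x b) : HLE T A Abar (T w) x (b - (A w - Abar) + τ) := by
  intro ε hε n
  obtain ⟨dT, hdT, hTT⟩ := unif_modT hTc ε hε
  obtain ⟨dA, hdA, hAA⟩ := unif_mod hAc τ hτ
  set ε₁ := min ε (min dT dA) with hε₁def
  have hε₁ : 0 < ε₁ := lt_min hε (lt_min hdT hdA)
  obtain ⟨k, hk, z, h1, h2, h3⟩ := H ε₁ hε₁ (n+1)
  obtain ⟨m, rfl⟩ : ∃ m, k = m + 1 := ⟨k - 1, by omega⟩
  refine ⟨m, by omega, T z, ?_, ?_, ?_⟩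
  · exact hTT _ _ (lt_of_lt_of_le h1 (le_trans (min_le_right _ _) (min_le_left _ _)))
  · rw [← Function.iterate_succ_apply]
    exact lt_of_lt_of_le h2 (min_le_left _ _)
  · have e1 : ∀ j, A (T^[j] (T z)) = A (T^[j+1] z) := by
      intro j; rw [Function.iterate_succ_apply]
    have hsum : (∑ j ∈ Finset.range m, (A (T^[j] (T z)) - Abar)) =
        (∑ j ∈ Finset.range (m+1), (A (T^[j] z) - Abar)) - (A z - Abar) := by
      calc (∑ j ∈ Finset.range m, (A (T^[j] (T z)) - Abar))
          = (∑ j ∈ Finset.range m, (A (T^[j+1] z) - Abar)) := by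
            apply Finset.sum_congr rfl; intro j _; rw [e1]
        _ = (∑ j ∈ Finset.range (m+1), (A (T^[j] z) - Abar)) - (A (T^[0] z) - Abar) := by
            rw [Finset.sum_range_succ']; ring
        _ = (∑ j ∈ Finset.range (m+1), (A (T^[j] z) - Abar)) - (A z - Abar) := by
            rw [Function.iterate_zero_apply]
    rw [hsum]
    have hA1 : |A z - A w| < τ :=
      hAA _ _ (lt_of_lt_of_le h1 (le_trans (min_le_right _ _) (min_le_right _ _)))
    have := abs_lt.mp hA1
    linarith

end Aux

/-- for a continuous separating sub-action `u` and distinct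
components, the strict inequality `h_A(x, y) > u y - u x` holds. -/
theorem separating_strict_inequality_between_components {X : Type*} [MetricSpace X] [CompactSpace X] [Nonempty X]
    [MeasurableSpace X] [BorelSpace X]
    (T : X → X) (hT : IsExpandingTransitive T)
    (θ : ℝ) (hθ0 : 0 < θ) (hθ1 : θ ≤ 1)
    (A : X → ℝ) (hA : IsThetaHolder θ A)
    (Abar : ℝ) (hAbar : IsErgMinValue T A Abar)
    (r : ℕ) (hr : 0 < r) (C : Fin r → Set X)
    (hC : ∀ i, IsIrredComponent T A Abar (C i))
    (hdisj : ∀ i j, i ≠ j → Disjoint (C i) (C j))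
    (hcover : nonwanderingSet T A Abar = ⋃ i, C i)
    (xp : Fin r → X) (hxp : ∀ i, xp i ∈ C i)
    (u : X → ℝ) (hu : IsSubaction T A Abar u)
    (hsep : contactLocus T A Abar u = nonwanderingSet T A Abar) :
    ∀ i j : Fin r, i ≠ j → ∀ x ∈ C i, ∀ y ∈ C j,
      ((u y - u x : ℝ) : EReal) < peierlsBarrier T A Abar x y := by
  intro i j hij x hx y hy
  by_contra hcon
  push_neg at hcon
  have hTc : Continuous T := hT.cont
  have hAc : Continuous A := holder_continuous hθ0 hA
  have huc : Continuous u := hu.1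
  choose ap hapΩ hCeq using hC
  have hmem : ∀ a : Fin r, ∀ w : X, w ∈ C a ↔ (w ∈ nonwanderingSet T A Abar ∧
      peierlsBarrier T A Abar (ap a) w + peierlsBarrier T A Abar w (ap a) = 0) := by
    intro a w
    rw [hCeq a]
    exact Set.mem_sep_iff
  have hsubΩ : ∀ a : Fin r, C a ⊆ nonwanderingSet T A Abar :=
    fun a w hw => ((hmem a w).mp hw).1
  -- exact values of the barrier on components
  have hval : ∀ a : Fin r, ∀ w ∈ C a,
      peierlsBarrier T A Abar (ap a) w = ((u w - u (ap a) : ℝ) : EReal) ∧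
      peierlsBarrier T A Abar w (ap a) = ((u (ap a) - u w : ℝ) : EReal) := by
    intro a w hw
    obtain ⟨hwΩ, hsum⟩ := (hmem a w).mp hw
    have hl1 : ((u w - u (ap a) : ℝ) : EReal) ≤ peierlsBarrier T A Abar (ap a) w :=
      peierls_ge hu _ _
    have hl2 : ((u (ap a) - u w : ℝ) : EReal) ≤ peierlsBarrier T A Abar w (ap a) :=
      peierls_ge hu _ _
    have hb1 : peierlsBarrier T A Abar (ap a) w ≠ ⊥ := fun hb => by
      rw [hb, le_bot_iff] at hl1
      exact (EReal.coe_ne_bot _) hl1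
    have hb2 : peierlsBarrier T A Abar w (ap a) ≠ ⊥ := fun hb => by
      rw [hb, le_bot_iff] at hl2
      exact (EReal.coe_ne_bot _) hl2
    have ht1 : peierlsBarrier T A Abar (ap a) w ≠ ⊤ := by
      intro ht
      rw [ht, EReal.top_add_of_ne_bot hb2] at hsum
      exact absurd hsum (by simp)
    have ht2 : peierlsBarrier T A Abar w (ap a) ≠ ⊤ := by
      intro ht
      rw [ht, add_comm, EReal.top_add_of_ne_bot hb1] at hsum
      exact absurd hsum (by simp)
    obtain ⟨s, hs⟩ : ∃ s : ℝ, peierlsBarrier T A Abar (ap a) w = (s : EReal) :=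
      ⟨_, (EReal.coe_toReal ht1 hb1).symm⟩
    obtain ⟨t, ht⟩ : ∃ t : ℝ, peierlsBarrier T A Abar w (ap a) = (t : EReal) :=
      ⟨_, (EReal.coe_toReal ht2 hb2).symm⟩
    rw [hs, ht, ← EReal.coe_add] at hsum
    have hst : s + t = 0 := by exact_mod_cast hsum
    rw [hs] at hl1
    rw [ht] at hl2
    have hs1 : u w - u (ap a) ≤ s := by exact_mod_cast hl1
    have ht1' : u (ap a) - u w ≤ t := by exact_mod_cast hl2
    constructor
    · rw [hs]; norm_cast; linarith
    · rw [ht]; norm_cast; linarith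
  -- forward invariance of components
  have hinv : ∀ a : Fin r, ∀ w ∈ C a, T w ∈ C a := by
    intro a w hw
    obtain ⟨hwΩ, _⟩ := (hmem a w).mp hw
    obtain ⟨hv1, hv2⟩ := hval a w hw
    have hup1 : peierlsBarrier T A Abar (ap a) (T w) ≤
        (((u w - u (ap a)) + (A w - Abar) : ℝ) : EReal) := by
      apply EReal.le_coe_of_forall_add
      intro σ hσ
      have hH : HLE T A Abar (ap a) w (u w - u (ap a) + σ/2) := by
        apply HLE_of_peierls_lt
        rw [hv1]
        exact_mod_cast (by linarith : u w - u (ap a) < u w - u (ap a) + σ/2)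
      have h2 := peierls_le_of_HLE (HLE_shiftA hTc hAc (by linarith : (0:ℝ) < σ/2) hH)
      rw [show u w - u (ap a) + σ/2 + (A w - Abar) + σ/2
          = (u w - u (ap a)) + (A w - Abar) + σ by ring] at h2
      exact h2
    have hup2 : peierlsBarrier T A Abar (T w) (ap a) ≤
        ((-((u w - u (ap a)) + (A w - Abar)) : ℝ) : EReal) := by
      apply EReal.le_coe_of_forall_add
      intro σ hσ
      have hH : HLE T A Abar w (ap a) (u (ap a) - u w + σ/2) := by
        apply HLE_of_peierls_lt
        rw [hv2]
        exact_mod_cast (by linarith : u (ap a) - u w < u (ap a) - u w + σ/2)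
      have h2 := peierls_le_of_HLE (HLE_shiftB hTc hAc (by linarith : (0:ℝ) < σ/2) hH)
      rw [show u (ap a) - u w + σ/2 - (A w - Abar) + σ/2
          = -((u w - u (ap a)) + (A w - Abar)) + σ by ring] at h2
      exact h2
    have hlow1 : ((u (T w) - u (ap a) : ℝ) : EReal) ≤
        peierlsBarrier T A Abar (ap a) (T w) := peierls_ge hu _ _
    have hlow2 : ((u (ap a) - u (T w) : ℝ) : EReal) ≤
        peierlsBarrier T A Abar (T w) (ap a) := peierls_ge hu _ _
    refine (hmem a (T w)).mpr ⟨omega_mapsTo hTc hAc hwΩ, le_antisymm ?_ ?_⟩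
    · calc peierlsBarrier T A Abar (ap a) (T w) + peierlsBarrier T A Abar (T w) (ap a)
          ≤ (((u w - u (ap a)) + (A w - Abar) : ℝ) : EReal)
            + ((-((u w - u (ap a)) + (A w - Abar)) : ℝ) : EReal) := add_le_add hup1 hup2
        _ = (((0:ℝ)) : EReal) := by rw [← EReal.coe_add]; norm_cast; ring
        _ = 0 := by norm_cast
    · calc (0 : EReal) = (((0:ℝ)) : EReal) := by norm_cast
        _ = ((u (T w) - u (ap a) : ℝ) : EReal) + ((u (ap a) - u (T w) : ℝ) : EReal) := by
            rw [← EReal.coe_add]; norm_cast; ring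
        _ ≤ _ := add_le_add hlow1 hlow2
  -- components are closed
  have hclosed : ∀ a : Fin r, IsClosed (C a) := by
    intro a
    apply isClosed_of_closure_subset
    intro w hwcl
    have hwΩ : w ∈ nonwanderingSet T A Abar := by
      have h1 : closure (C a) ⊆ closure (nonwanderingSet T A Abar) := closure_mono (hsubΩ a)
      have h2 := (omega_closed T A Abar).closure_eq
      rw [h2] at h1
      exact h1 hwcl
    have hup1 : peierlsBarrier T A Abar (ap a) w ≤ ((u w - u (ap a) : ℝ) : EReal) := by
      apply EReal.le_coe_of_forall_add
      intro σ hσ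
      apply peierls_le_of_HLE
      intro ε hε n
      obtain ⟨du, hdu, huu⟩ := unif_mod huc (σ/2) (by linarith)
      obtain ⟨w', hw'C, hw'd⟩ := Metric.mem_closure_iff.mp hwcl (min (ε/2) du)
        (lt_min (by linarith) hdu)
      have hH : HLE T A Abar (ap a) w' (u w' - u (ap a) + σ/2) := by
        apply HLE_of_peierls_lt
        rw [(hval a w' hw'C).1]
        exact_mod_cast (by linarith : u w' - u (ap a) < u w' - u (ap a) + σ/2)
      obtain ⟨k, hk, z, h1, h2, h3⟩ := hH (ε/2) (by linarith) n
      refine ⟨k, hk, z, by linarith, ?_, ?_⟩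
      · have hww' : dist w' w < ε/2 := by
          rw [dist_comm]; exact lt_of_lt_of_le hw'd (min_le_left _ _)
        calc dist (T^[k] z) w ≤ dist (T^[k] z) w' + dist w' w := dist_triangle _ _ _
          _ < ε := by linarith
      · have huw : |u w' - u w| < σ/2 := by
          apply huu
          rw [dist_comm]
          exact lt_of_lt_of_le hw'd (min_le_right _ _)
        have := abs_lt.mp huw
        linarith
    have hup2 : peierlsBarrier T A Abar w (ap a) ≤ ((u (ap a) - u w : ℝ) : EReal) := by
      apply EReal.le_coe_of_forall_add
      intro σ hσ
      apply peierls_le_of_HLE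
      intro ε hε n
      obtain ⟨du, hdu, huu⟩ := unif_mod huc (σ/2) (by linarith)
      obtain ⟨w', hw'C, hw'd⟩ := Metric.mem_closure_iff.mp hwcl (min (ε/2) du)
        (lt_min (by linarith) hdu)
      have hH : HLE T A Abar w' (ap a) (u (ap a) - u w' + σ/2) := by
        apply HLE_of_peierls_lt
        rw [(hval a w' hw'C).2]
        exact_mod_cast (by linarith : u (ap a) - u w' < u (ap a) - u w' + σ/2)
      obtain ⟨k, hk, z, h1, h2, h3⟩ := hH (ε/2) (by linarith) n
      refine ⟨k, hk, z, ?_, by linarith, ?_⟩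
      · have hww' : dist w' w < ε/2 := by
          rw [dist_comm]; exact lt_of_lt_of_le hw'd (min_le_left _ _)
        calc dist z w ≤ dist z w' + dist w' w := dist_triangle _ _ _
          _ < ε := by linarith
      · have huw : |u w' - u w| < σ/2 := by
          apply huu
          rw [dist_comm]
          exact lt_of_lt_of_le hw'd (min_le_right _ _)
        have := abs_lt.mp huw
        linarith
    have he1 : peierlsBarrier T A Abar (ap a) w = ((u w - u (ap a) : ℝ) : EReal) :=
      le_antisymm hup1 (peierls_ge hu _ _)
    have he2 : peierlsBarrier T A Abar w (ap a) = ((u (ap a) - u w : ℝ) : EReal) :=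
      le_antisymm hup2 (peierls_ge hu _ _)
    refine (hmem a w).mpr ⟨hwΩ, ?_⟩
    rw [he1, he2, ← EReal.coe_add,
      show (u w - u (ap a)) + (u (ap a) - u w) = 0 by ring]
    norm_cast
  -- the defect function
  set f : X → ℝ := fun p => A p - Abar - (u (T p) - u p) with hfdef
  have hfeq : ∀ p, f p = A p - Abar - (u (T p) - u p) := fun p => rfl
  have hf0 : ∀ p, 0 ≤ f p := by
    intro p
    have := hu.2 p
    rw [hfeq]
    linarith
  have hfc : Continuous f := (hAc.sub continuous_const).sub ((huc.comp hTc).sub huc)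
  have hfΩ' : ∀ p, f p = 0 → p ∈ nonwanderingSet T A Abar := by
    intro p hp
    rw [← hsep]
    rw [hfeq] at hp
    show A p = u (T p) - u p + Abar
    linarith
  have hxΩ : x ∈ nonwanderingSet T A Abar := hsubΩ i hx
  -- pairwise distances between components
  have hpair : ∀ b : Fin r, ∃ m : ℝ, 0 < m ∧
      (b ≠ i → ∀ p ∈ C i, ∀ q ∈ C b, m ≤ dist p q) := by
    intro b
    by_cases hbi : b = i
    · exact ⟨1, one_pos, fun h => absurd hbi h⟩
    · have hcomp : IsCompact (C i) := (hclosed i).isCompact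
      obtain ⟨p0, hp0, hmin⟩ := hcomp.exists_isMinOn ⟨xp i, hxp i⟩
        ((Metric.continuous_infDist_pt (C b)).continuousOn)
      refine ⟨Metric.infDist p0 (C b), ?_, ?_⟩
      · rcases lt_or_eq_of_le (Metric.infDist_nonneg (x := p0) (s := C b)) with h | h
        · exact h
        · exfalso
          have hclos : p0 ∈ closure (C b) :=
            (Metric.mem_closure_iff_infDist_zero ⟨xp b, hxp b⟩).mpr h.symm
          rw [(hclosed b).closure_eq] at hclos
          exact Set.disjoint_left.mp (hdisj i b (fun hh => hbi hh.symm)) hp0 hclos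
      · intro _ p hp q hq
        exact le_trans (hmin hp) (Metric.infDist_le_dist_of_mem hq)
  choose m hmpos hmprop using hpair
  have hFinNe : Nonempty (Fin r) := ⟨i⟩
  set D := Finset.univ.inf' Finset.univ_nonempty m with hDdef
  have hD : 0 < D := by
    rw [hDdef, Finset.lt_inf'_iff]
    exact fun b _ => hmpos b
  have hDprop : ∀ b : Fin r, b ≠ i → ∀ p ∈ C i, ∀ q ∈ C b, D ≤ dist p q := by
    intro b hb p hp q hq
    exact le_trans (Finset.inf'_le m (Finset.mem_univ b)) (hmprop b hb p hp q hq)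
  obtain ⟨ρ₀, hρ₀, hTT⟩ := unif_modT hTc (D/2) (by linarith)
  set ρ := min ρ₀ (D/4) with hρdef
  have hρ : 0 < ρ := lt_min hρ₀ (by linarith)
  have hρ1 : ρ ≤ ρ₀ := min_le_left _ _
  have hρ2 : ρ ≤ D/4 := min_le_right _ _
  -- the compact set far from all components, and the gap η
  set K : Set X := ⋂ a : Fin r, (fun p => Metric.infDist p (C a)) ⁻¹' Set.Ici ρ with hKdef
  have hKclosed : IsClosed K := isClosed_iInter fun a =>
    IsClosed.preimage (Metric.continuous_infDist_pt (C a)) isClosed_Ici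
  have hKmem : ∀ p : X, p ∈ K ↔ ∀ a : Fin r, ρ ≤ Metric.infDist p (C a) := by
    intro p
    rw [hKdef]
    simp [Set.mem_iInter]
  obtain ⟨η, hη, hηK⟩ : ∃ η : ℝ, 0 < η ∧ ∀ p ∈ K, η ≤ f p := by
    rcases K.eq_empty_or_nonempty with hKe | hKne
    · exact ⟨1, one_pos, fun p hp => absurd (hKe ▸ hp) (Set.notMem_empty p)⟩
    · obtain ⟨p0, hp0, hmin⟩ := (hKclosed.isCompact).exists_isMinOn hKne hfc.continuousOn
      refine ⟨f p0, ?_, fun p hp => hmin hp⟩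
      rcases lt_or_eq_of_le (hf0 p0) with h | h
      · exact h
      · exfalso
        have hp0Ω : p0 ∈ nonwanderingSet T A Abar := hfΩ' p0 h.symm
        rw [hcover] at hp0Ω
        obtain ⟨a, ha⟩ := Set.mem_iUnion.mp hp0Ω
        have h1 : ρ ≤ Metric.infDist p0 (C a) := (hKmem p0).mp hp0 a
        rw [Metric.infDist_zero_of_mem ha] at h1
        linarith
  obtain ⟨ε₂, hε₂, huu⟩ := unif_mod huc (η/8) (by linarith)
  set ε := min ρ ε₂ with hεdef
  have hε : 0 < ε := lt_min hρ hε₂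
  have hερ : ε ≤ ρ := min_le_left _ _
  have hεu : ε ≤ ε₂ := min_le_right _ _
  -- extract a nearly-minimizing orbit segment from near x to near y
  have hHxy : HLE T A Abar x y (u y - u x + η/4) := by
    apply HLE_of_peierls_lt
    apply lt_of_le_of_lt hcon
    exact_mod_cast (by linarith : u y - u x < u y - u x + η/4)
  obtain ⟨k, hk, z, hz1, hz2, hz3⟩ := hHxy ε hε 1
  have hsumf : (∑ j ∈ Finset.range k, f (T^[j] z)) < η/2 := by
    have hid := sum_defect_eq T A Abar u z k
    have h1' := abs_lt.mp (huu z x (lt_of_lt_of_le hz1 hεu))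
    have h2' := abs_lt.mp (huu (T^[k] z) y (lt_of_lt_of_le hz2 hεu))
    have hff : (∑ j ∈ Finset.range k, f (T^[j] z)) =
        (∑ j ∈ Finset.range k, (A (T^[j] z) - Abar - (u (T (T^[j] z)) - u (T^[j] z)))) := rfl
    rw [hff]
    linarith
  have hnotK : ∀ jj, jj < k → T^[jj] z ∉ K := by
    intro jj hjj hKm
    have hle := Finset.single_le_sum (f := fun t => f (T^[t] z))
      (fun t _ => hf0 _) (Finset.mem_range.mpr hjj)
    have := hηK _ hKm
    linarith
  have hCine : (C i).Nonempty := ⟨xp i, hxp i⟩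
  -- the orbit segment stays ρ-close to C i
  have key : ∀ jj, jj < k → Metric.infDist (T^[jj] z) (C i) < ρ := by
    intro jj
    induction jj with
    | zero =>
        intro _
        rw [Function.iterate_zero_apply]
        calc Metric.infDist z (C i) ≤ dist z x := Metric.infDist_le_dist_of_mem hx
          _ < ε := hz1
          _ ≤ ρ := hερ
    | succ mm ih =>
        intro hlt
        have hP := ih (by omega)
        obtain ⟨p, hpC, hpd⟩ := (Metric.infDist_lt_iff hCine).mp hP
        have hTp : T p ∈ C i := hinv i p hpC
        have hd2 : dist (T^[mm+1] z) (T p) < D/2 := by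
          rw [Function.iterate_succ_apply']
          exact hTT _ _ (lt_of_lt_of_le hpd hρ1)
        have hnot := hnotK (mm+1) hlt
        rw [hKmem] at hnot
        push_neg at hnot
        obtain ⟨bb, hbb⟩ := hnot
        obtain ⟨q, hqC, hqd⟩ := (Metric.infDist_lt_iff ⟨xp bb, hxp bb⟩).mp hbb
        by_cases hbi : bb = i
        · rw [hbi] at hqC
          exact lt_of_le_of_lt (Metric.infDist_le_dist_of_mem hqC) hqd
        · exfalso
          have hDle := hDprop bb hbi (T p) hTp q hqC
          have htri : dist (T p) q ≤ dist (T p) (T^[mm+1] z) + dist (T^[mm+1] z) q :=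
            dist_triangle _ _ _
          rw [dist_comm (T p) (T^[mm+1] z)] at htri
          linarith
  -- final contradiction at the endpoint
  obtain ⟨mm, rfl⟩ : ∃ mm, k = mm + 1 := ⟨k - 1, by omega⟩
  have hP := key mm (by omega)
  obtain ⟨p, hpC, hpd⟩ := (Metric.infDist_lt_iff hCine).mp hP
  have hTp : T p ∈ C i := hinv i p hpC
  have hd2 : dist (T^[mm+1] z) (T p) < D/2 := by
    rw [Function.iterate_succ_apply']
    exact hTT _ _ (lt_of_lt_of_le hpd hρ1)
  have hDle := hDprop j (fun h => hij h.symm) (T p) hTp y hy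
  have htri : dist (T p) y ≤ dist (T p) (T^[mm+1] z) + dist (T^[mm+1] z) y :=
    dist_triangle _ _ _
  rw [dist_comm (T p) (T^[mm+1] z)] at htri
  linarith
end

section
/- Let A : X → ℝ be θ-Hölder for some θ ∈ (0,1], let v be any continuous sub-action for A, and let u be any continuous calibrated sub-action for A. Then the function u − v is constant on every irreducible component of Ω(A), and min_{x ∈ X} (u − v)(x) = min_{x ∈ Ω(A)} (u − v)(x). -/
open MeasureTheory Filter Topology

section AuxGLT

variable {X : Type*} [MetricSpace X]

private theorem aux_sum_ge_telescope (T : X → X) (A : X → ℝ) (Abar : ℝ) (w : X → ℝ)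
    (hw : IsSubaction T A Abar w) (z : X) (k : ℕ) :
    w (T^[k] z) - w z ≤ ∑ j ∈ Finset.range k, (A (T^[j] z) - Abar) := by
  have : ∑ j ∈ Finset.range k, (w (T^[j+1] z) - w (T^[j] z)) ≤
      ∑ j ∈ Finset.range k, (A (T^[j] z) - Abar) := by
    apply Finset.sum_le_sum
    intro j _
    have := hw.2 (T^[j] z)
    rw [Function.iterate_succ_apply']
    linarith
  rwa [Finset.sum_range_sub (fun j => w (T^[j] z)) k] at this

private theorem aux_subaction_le_peierls (T : X → X) (A : X → ℝ) (Abar : ℝ) (w : X → ℝ)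
    (hw : IsSubaction T A Abar w) (x x' : X) :
    ((w x' - w x : ℝ) : EReal) ≤ peierlsBarrier T A Abar x x' := by
  set h := peierlsBarrier T A Abar x x'
  by_contra hcon
  push_neg at hcon
  obtain ⟨r, hr1, hr2⟩ := EReal.exists_between_coe_real hcon
  refine absurd hr1 (not_lt.2 ?_)
  have hrlt : r < w x' - w x := by exact_mod_cast hr2
  set η := (w x' - w x - r) / 2 with hη
  have hηpos : 0 < η := by simp [hη]; linarith
  obtain ⟨δ₁, hδ₁, h1⟩ := Metric.continuousAt_iff.1 (hw.1.continuousAt (x := x)) η hηpos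
  obtain ⟨δ₂, hδ₂, h2⟩ := Metric.continuousAt_iff.1 (hw.1.continuousAt (x := x')) η hηpos
  have hεpos : (0:ℝ) < min δ₁ δ₂ := lt_min hδ₁ hδ₂
  refine le_trans ?_ (le_iSup _ (⟨min δ₁ δ₂, hεpos⟩ : {e : ℝ // 0 < e}))
  apply le_liminf_of_le (by isBoundedDefault)
  apply Eventually.of_forall
  intro k
  apply le_sInf
  rintro b ⟨z, hz, hz', rfl⟩
  rw [EReal.coe_le_coe_iff]
  have e1 : |w z - w x| < η := by
    have := h1 (lt_of_lt_of_le hz (min_le_left _ _))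
    rwa [Real.dist_eq] at this
  have e2 : |w (T^[k] z) - w x'| < η := by
    have := h2 (lt_of_lt_of_le hz' (min_le_right _ _))
    rwa [Real.dist_eq] at this
  have := aux_sum_ge_telescope T A Abar w hw z k
  rw [abs_lt] at e1 e2
  linarith [e1.1, e1.2, e2.1, e2.2]

private theorem aux_ereal_eq (a b : EReal) (r s : ℝ) (hr : (r:EReal) ≤ a) (hs : (s:EReal) ≤ b)
    (hab : a + b = 0) (hrs : r + s = 0) : a = (r:EReal) := by
  induction a using EReal.rec with
  | bot => simp at hr
  | top =>
    rw [EReal.top_add_of_ne_bot (fun h => by simp [h] at hs)] at hab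
    exact absurd hab (by simp)
  | coe a' =>
    induction b using EReal.rec with
    | bot => simp at hs
    | top =>
      rw [EReal.add_top_of_ne_bot (by simp)] at hab
      exact absurd hab (by simp)
    | coe b' =>
      rw [← EReal.coe_add] at hab
      rw [EReal.coe_le_coe_iff] at hr hs
      have h0 : (a' + b' : ℝ) = 0 := by exact_mod_cast hab
      have h1 : a' = r := by linarith
      exact_mod_cast h1

/-- For two sub-actions `u, w` and `x, y` with `h(x,y) + h(y,x) = 0`,
we get `u y - u x = w y - w x`. -/
private theorem aux_equal_increments (T : X → X) (A : X → ℝ) (Abar : ℝ) (w u : X → ℝ)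
    (hw : IsSubaction T A Abar w) (hu : IsSubaction T A Abar u) (x y : X)
    (hxy : peierlsBarrier T A Abar x y + peierlsBarrier T A Abar y x = 0) :
    u y - u x = w y - w x := by
  have e1 := aux_subaction_le_peierls T A Abar u hu x y
  have e2 := aux_subaction_le_peierls T A Abar u hu y x
  have e3 := aux_subaction_le_peierls T A Abar w hw x y
  have e4 := aux_subaction_le_peierls T A Abar w hw y x
  have q1 := aux_ereal_eq _ _ _ _ e1 e2 hxy (by ring)
  have q2 := aux_ereal_eq _ _ _ _ e3 e4 hxy (by ring)
  have : ((u y - u x : ℝ) : EReal) = ((w y - w x : ℝ) : EReal) := by rw [← q1, ← q2]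
  exact_mod_cast this

end AuxGLT

/-- for a continuous sub-action `v` and a continuous calibrated
sub-action `u`, `u - v` is constant on each irreducible component and
`min_X (u - v) = min_{Ω(A)} (u - v)`. -/
theorem calibrated_minus_subaction_min_on_nonwandering {X : Type*} [MetricSpace X] [CompactSpace X] [Nonempty X]
    [MeasurableSpace X] [BorelSpace X]
    (T : X → X) (hT : IsExpandingTransitive T)
    (θ : ℝ) (hθ0 : 0 < θ) (hθ1 : θ ≤ 1)
    (A : X → ℝ) (hA : IsThetaHolder θ A)
    (Abar : ℝ) (hAbar : IsErgMinValue T A Abar)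
    (v : X → ℝ) (hv : IsSubaction T A Abar v)
    (u : X → ℝ) (hu : IsCalibrated T A Abar u) :
    (∀ C : Set X, IsIrredComponent T A Abar C →
      ∀ x ∈ C, ∀ y ∈ C, u x - v x = u y - v y) ∧
    (∃ x₀ ∈ nonwanderingSet T A Abar, ∀ x : X, u x₀ - v x₀ ≤ u x - v x) :=  by
  classical
  have husub : IsSubaction T A Abar u := by
    refine ⟨hu.1, fun x => ?_⟩
    have := (hu.2 (T x)).1 x rfl
    linarith
  constructor
  · rintro C ⟨x₀, hx₀, rfl⟩ x hx y hy
    have ex := aux_equal_increments T A Abar v u hv husub x₀ x hx.2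
    have ey := aux_equal_increments T A Abar v u hv husub x₀ y hy.2
    linarith
  · -- backward orbit construction
    obtain ⟨m, -, hm⟩ := IsCompact.exists_isMinOn isCompact_univ Set.univ_nonempty
      ((husub.1.sub hv.1).continuousOn (s := Set.univ))
    have hmmin : ∀ x : X, u m - v m ≤ u x - v x := fun x => hm (Set.mem_univ x)
    -- choice of calibrated preimage
    have hg : ∀ x : X, ∃ y : X, T y = x ∧ u x = u y + A y - Abar := fun x => (hu.2 x).2
    choose g hgT hgu using hg
    set seq : ℕ → X := fun n => g^[n] m with hseq
    have hseqsucc : ∀ n, seq (n+1) = g (seq n) := fun n => Function.iterate_succ_apply' g n m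
    have hTseq : ∀ n, T (seq (n+1)) = seq n := fun n => by rw [hseqsucc]; exact hgT (seq n)
    have huseq : ∀ n, u (seq n) = u (seq (n+1)) + A (seq (n+1)) - Abar := fun n => by
      rw [hseqsucc]; exact hgu (seq n)
    -- minimizer propagation and v-tightness
    have key : ∀ n, (u (seq n) - v (seq n) = u m - v m) ∧
        (v (seq n) - v (seq (n+1)) = A (seq (n+1)) - Abar) := by
      intro n
      induction n with
      | zero =>
        have hvsub := hv.2 (seq 1)
        rw [hTseq 0] at hvsub
        have hu0 := huseq 0
        have hle : u (seq 1) - v (seq 1) ≤ u (seq 0) - v (seq 0) := by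
          simp only [hseq, Function.iterate_zero_apply] at hu0 hvsub ⊢
          linarith
        have hge := hmmin (seq 1)
        have h0 : seq 0 = m := Function.iterate_zero_apply g m
        constructor
        · rw [h0]
        · rw [h0] at hle ⊢
          simp only [hseq, Function.iterate_zero_apply] at hu0 hvsub ⊢
          linarith
      | succ n ih =>
        have hvsub := hv.2 (seq (n+2))
        rw [hTseq (n+1)] at hvsub
        have hu0 := huseq (n+1)
        -- first show seq (n+1) is a minimizer
        have hmin1 : u (seq (n+1)) - v (seq (n+1)) = u m - v m := by
          have hvsub' := hv.2 (seq (n+1))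
          rw [hTseq n] at hvsub'
          have hu0' := huseq n
          have hle : u (seq (n+1)) - v (seq (n+1)) ≤ u (seq n) - v (seq n) := by linarith
          have hge := hmmin (seq (n+1))
          linarith [ih.1]
        refine ⟨hmin1, ?_⟩
        have hmin2 : u (seq (n+2)) - v (seq (n+2)) = u m - v m := by
          have hle : u (seq (n+2)) - v (seq (n+2)) ≤ u (seq (n+1)) - v (seq (n+1)) := by
            linarith
          have hge := hmmin (seq (n+2))
          linarith
        linarith
    -- iterate identity
    have hiter : ∀ a b : ℕ, T^[a] (seq (b + a)) = seq b := by
      intro a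
      induction a with
      | zero => intro b; simp
      | succ a ih =>
        intro b
        have : b + (a + 1) = (b + a) + 1 := by ring
        rw [this, Function.iterate_succ_apply, hTseq (b+a), ih b]
    -- Birkhoff sums along the backward orbit
    have hbirk : ∀ n k : ℕ, ∑ j ∈ Finset.range k, (A (T^[j] (seq (n + k))) - Abar)
        = v (seq n) - v (seq (n + k)) := by
      intro n k
      induction k with
      | zero => simp
      | succ k ih =>
        rw [Finset.sum_range_succ']
        have hstep : ∀ j, T^[j+1] (seq (n + (k+1))) = T^[j] (seq (n + k)) := by
          intro j
          have : n + (k + 1) = (n + k) + 1 := by ring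
          rw [this, Function.iterate_succ_apply, hTseq (n+k)]
        have hsum : ∑ j ∈ Finset.range k, (A (T^[j+1] (seq (n + (k+1)))) - Abar)
            = ∑ j ∈ Finset.range k, (A (T^[j] (seq (n + k))) - Abar) := by
          apply Finset.sum_congr rfl
          intro j _
          rw [hstep j]
        rw [hsum, ih]
        simp only [Function.iterate_zero_apply]
        have := (key (n + k)).2
        have hnk : n + (k + 1) = (n + k) + 1 := by ring
        rw [hnk]
        linarith
    -- cluster point
    obtain ⟨xb, -, φ, hφ, hconv⟩ := isCompact_univ.tendsto_subseq
      (fun n => Set.mem_univ (seq n))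
    refine ⟨xb, ?_, ?_⟩
    · -- xb ∈ nonwanderingSet
      intro ε hε
      obtain ⟨δ, hδpos, hδ⟩ := Metric.continuousAt_iff.1 (hv.1.continuousAt (x := xb))
        (ε/2) (by linarith)
      set ρ := min ε δ with hρ
      have hρpos : 0 < ρ := lt_min hε hδpos
      obtain ⟨N, hN⟩ := Metric.tendsto_atTop.1 hconv ρ hρpos
      have h1 : dist (seq (φ N)) xb < ρ := hN N le_rfl
      have h2 : dist (seq (φ (N+1))) xb < ρ := hN (N+1) (Nat.le_succ N)
      have hφlt : φ N < φ (N+1) := hφ (Nat.lt_succ_self N)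
      refine ⟨φ (N+1) - φ N, by omega, seq (φ (N+1)), ?_, ?_, ?_⟩
      · rw [dist_comm]; exact lt_of_lt_of_le h2 (min_le_left _ _)
      · have : φ N + (φ (N+1) - φ N) = φ (N+1) := by omega
        rw [show seq (φ (N+1)) = seq (φ N + (φ (N+1) - φ N)) by rw [this],
          hiter (φ (N+1) - φ N) (φ N), dist_comm]
        exact lt_of_lt_of_le h1 (min_le_left _ _)
      · have heq : φ N + (φ (N+1) - φ N) = φ (N+1) := by omega
        have := hbirk (φ N) (φ (N+1) - φ N)
        rw [heq] at this
        rw [this]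
        have e1 : |v (seq (φ N)) - v xb| < ε/2 := by
          have := hδ (lt_of_lt_of_le h1 (min_le_right _ _))
          rwa [Real.dist_eq] at this
        have e2 : |v (seq (φ (N+1))) - v xb| < ε/2 := by
          have := hδ (lt_of_lt_of_le h2 (min_le_right _ _))
          rwa [Real.dist_eq] at this
        rw [abs_lt] at e1 e2 ⊢
        constructor <;> linarith [e1.1, e1.2, e2.1, e2.2]
    · -- xb is a global minimizer
      intro x
      have hconst : Tendsto (fun i => u (seq (φ i)) - v (seq (φ i))) atTop
          (𝓝 (u xb - v xb)) := ((husub.1.sub hv.1).continuousAt).tendsto.comp hconv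
      have hconst2 : (fun i => u (seq (φ i)) - v (seq (φ i))) = fun _ => u m - v m := by
        funext i; exact (key (φ i)).1
      rw [hconst2] at hconst
      have : u xb - v xb = u m - v m := (tendsto_nhds_unique tendsto_const_nhds hconst).symm
      rw [this]
      exact hmmin x
end

section
/- Let A : X → ℝ be θ-Hölder for some θ ∈ (0,1]. If u is a continuous sub-action for A, then u(x̄) − u(x) ≤ φ_A(x, x̄) for all x, x̄ ∈ X (where the inequality is trivially true when φ_A(x, x̄) = +∞). -/
open MeasureTheory Filter Topology

/-- for any continuous sub-action `u`,
`u x' - u x ≤ φ_A(x, x')`. -/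
theorem subaction_le_manePotential {X : Type*} [MetricSpace X] [CompactSpace X] [Nonempty X]
    [MeasurableSpace X] [BorelSpace X]
    (T : X → X) (hT : IsExpandingTransitive T)
    (θ : ℝ) (hθ0 : 0 < θ) (hθ1 : θ ≤ 1)
    (A : X → ℝ) (hA : IsThetaHolder θ A)
    (Abar : ℝ) (hAbar : IsErgMinValue T A Abar)
    (u : X → ℝ) (hu : IsSubaction T A Abar u) :
    ∀ x x' : X, ((u x' - u x : ℝ) : EReal) ≤ manePotential T A Abar x x' := by
  obtain ⟨hu_cont, hu_sub⟩ := hu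
  intro x x'
  apply le_of_forall_lt
  intro c hc
  obtain ⟨r, hcr, hru⟩ := EReal.exists_between_coe_real hc
  have hr : r < u x' - u x := by exact_mod_cast hru
  have hηpos : 0 < u x' - u x - r := by linarith
  have huc : UniformContinuous u := CompactSpace.uniformContinuous_of_continuous hu_cont
  rw [Metric.uniformContinuous_iff] at huc
  obtain ⟨ε, hε, hεu⟩ := huc ((u x' - u x - r) / 2) (by linarith)
  refine lt_of_lt_of_le hcr (le_trans ?_ (le_iSup (fun e : {e : ℝ // 0 < e} =>
    ⨅ k : {n : ℕ // 1 ≤ n}, birkhoffInf T A Abar e.1 x x' k.1) ⟨ε, hε⟩))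
  refine le_iInf fun k => le_sInf ?_
  rintro v ⟨z, hz1, hz2, rfl⟩
  rw [EReal.coe_le_coe_iff]
  have h1 : dist (u z) (u x) < (u x' - u x - r) / 2 := hεu hz1
  have h2 : dist (u (T^[k.1] z)) (u x') < (u x' - u x - r) / 2 := hεu hz2
  rw [Real.dist_eq] at h1 h2
  have h1' := abs_lt.1 h1
  have h2' := abs_lt.1 h2
  have htel : ∑ j ∈ Finset.range k.1, (u (T^[j+1] z) - u (T^[j] z))
      = u (T^[k.1] z) - u z := Finset.sum_range_sub (fun j => u (T^[j] z)) k.1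
  have hsum : u (T^[k.1] z) - u z ≤ ∑ j ∈ Finset.range k.1, (A (T^[j] z) - Abar) := by
    rw [← htel]
    refine Finset.sum_le_sum fun j _ => ?_
    have := hu_sub (T^[j] z)
    rw [Function.iterate_succ_apply']
    linarith
  linarith [h1'.1, h1'.2, h2'.1, h2'.2]
end

section
/- Let A : X → ℝ be θ-Hölder for some θ ∈ (0,1]. The Mañé potential satisfies the triangle inequality: for all x, x̄, x̄̄ ∈ X, φ_A(x, x̄̄) ≤ φ_A(x, x̄) + φ_A(x̄, x̄̄), the inequality being understood in ℝ ∪ {+∞}. -/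
open MeasureTheory Filter Topology

section ManeAux

open Metric

variable {X : Type*} [MetricSpace X]

private lemma ereal_bot_or_real {x : EReal} (hx : x ≠ ⊤) : x = ⊥ ∨ ∃ r : ℝ, x = (r : EReal) := by
  induction x using EReal.rec with
  | bot => exact Or.inl rfl
  | coe s => exact Or.inr ⟨s, rfl⟩
  | top => exact absurd rfl hx

private lemma ereal_exists_real_gt {x : EReal} (hx : x ≠ ⊤) : ∃ r : ℝ, x < (r : EReal) := by
  rcases ereal_bot_or_real hx with h | ⟨r, rfl⟩
  · exact ⟨0, h ▸ EReal.bot_lt_coe 0⟩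
  · exact ⟨r + 1, by exact_mod_cast lt_add_one r⟩

private lemma ereal_le_of_forall_pos {L S : EReal}
    (h : ∀ η : ℝ, 0 < η → L ≤ S + (η : EReal)) : L ≤ S := by
  induction S using EReal.rec with
  | bot => simpa [EReal.bot_add] using h 1 one_pos
  | coe s =>
    refine EReal.le_of_forall_lt_iff_le.mp fun c hc => ?_
    have hsc : s < c := EReal.coe_lt_coe_iff.mp hc
    calc L ≤ (s : EReal) + ((c - s : ℝ) : EReal) := h (c - s) (by linarith)
      _ = (c : EReal) := by rw [← EReal.coe_add]; norm_num
  | top => exact le_top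

private lemma ereal_aux {L I₁ I₂ : EReal} {E : ℝ} (h₁ : I₁ ≠ ⊤) (h₂ : I₂ ≠ ⊤)
    (h : ∀ a b : ℝ, I₁ < (a : EReal) → I₂ < (b : EReal) → L ≤ ((a + b + E : ℝ) : EReal)) :
    L ≤ I₁ + I₂ + (E : EReal) := by
  obtain ⟨a₀, ha₀⟩ := ereal_exists_real_gt h₁
  obtain ⟨b₀, hb₀⟩ := ereal_exists_real_gt h₂
  rcases ereal_bot_or_real h₁ with h1b | ⟨r₁, rfl⟩
  · subst h1b
    have hLbot : L = ⊥ := by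
      rw [EReal.eq_bot_iff_forall_lt]
      intro r
      refine lt_of_le_of_lt (h (r - b₀ - E - 1) b₀ (EReal.bot_lt_coe _) hb₀) ?_
      exact_mod_cast (by linarith : r - b₀ - E - 1 + b₀ + E < r)
    simp [hLbot, EReal.bot_add]
  · rcases ereal_bot_or_real h₂ with h2b | ⟨r₂, rfl⟩
    · subst h2b
      have hLbot : L = ⊥ := by
        rw [EReal.eq_bot_iff_forall_lt]
        intro r
        refine lt_of_le_of_lt (h a₀ (r - a₀ - E - 1) ha₀ (EReal.bot_lt_coe _)) ?_
        exact_mod_cast (by linarith : a₀ + (r - a₀ - E - 1) + E < r)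
      simp [hLbot, EReal.add_bot, EReal.bot_add]
    · have heq : ((r₁ : EReal) + (r₂ : EReal) + (E : EReal)) = ((r₁ + r₂ + E : ℝ) : EReal) := by
        rw [← EReal.coe_add, ← EReal.coe_add]
      rw [heq]
      refine EReal.le_of_forall_lt_iff_le.mp fun c hc => ?_
      have hlt : r₁ + r₂ + E < c := EReal.coe_lt_coe_iff.mp hc
      have hh := h (r₁ + (c - (r₁ + r₂ + E)) / 2) (r₂ + (c - (r₁ + r₂ + E)) / 2)
        (by exact_mod_cast (by linarith : r₁ < r₁ + (c - (r₁ + r₂ + E)) / 2))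
        (by exact_mod_cast (by linarith : r₂ < r₂ + (c - (r₁ + r₂ + E)) / 2))
      refine hh.trans ?_
      exact_mod_cast (by linarith :
        r₁ + (c - (r₁ + r₂ + E)) / 2 + (r₂ + (c - (r₁ + r₂ + E)) / 2) + E ≤ c)

private lemma geom_bound {μ : ℝ} (h0 : 0 ≤ μ) (h1 : μ < 1) (n : ℕ) :
    ∑ j ∈ Finset.range n, μ ^ (n - j) ≤ (1 - μ)⁻¹ := by
  have hsum : ∑ j ∈ Finset.range n, μ ^ (n - j) ≤ ∑ j ∈ Finset.range n, μ ^ j := by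
    rw [← Finset.sum_range_reflect (fun j => μ ^ j) n]
    refine Finset.sum_le_sum fun j hj => ?_
    have hj' : j < n := Finset.mem_range.mp hj
    exact pow_le_pow_of_le_one h0 h1.le (by omega)
  refine hsum.trans ?_
  have h := Summable.sum_le_tsum (Finset.range n) (fun i _ => pow_nonneg h0 i)
    (summable_geometric_of_lt_one h0 h1)
  rwa [tsum_geometric_of_lt_one h0 h1] at h

private lemma pow_rpow_comm {x : ℝ} (hx : 0 ≤ x) (θ : ℝ) (m : ℕ) :
    (x ^ m) ^ θ = (x ^ θ) ^ m := by
  rw [← Real.rpow_natCast x m, ← Real.rpow_natCast (x ^ θ) m, ← Real.rpow_mul hx,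
    ← Real.rpow_mul hx, mul_comm]

private lemma uniform_lift [CompactSpace X] [Nonempty X] {T : X → X}
    (hc : Continuous T) (ho : IsOpenMap T) {lam δ : ℝ} (hδ : 0 < δ)
    (hcontr : ∀ x y : X, dist x y ≤ δ → dist x y ≤ lam * dist (T x) (T y)) :
    ∃ ρ : ℝ, 0 < ρ ∧ ∀ z p : X, dist p (T z) < ρ →
      ∃ w : X, T w = p ∧ dist w z ≤ lam * dist p (T z) := by
  have hball : ∀ z : X, ∃ r : ℝ, 0 < r ∧ ball (T z) (2 * r) ⊆ T '' ball z (δ / 2) := by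
    intro z
    have hopen : IsOpen (T '' ball z (δ / 2)) := ho _ isOpen_ball
    have hmem : T z ∈ T '' ball z (δ / 2) := ⟨z, mem_ball_self (by linarith), rfl⟩
    obtain ⟨r, hr, hsub⟩ := Metric.isOpen_iff.mp hopen _ hmem
    refine ⟨r / 2, by linarith, ?_⟩
    rw [show 2 * (r / 2) = r by ring]
    exact hsub
  choose r hr hsub using hball
  have hUnhds : ∀ z ∈ (Set.univ : Set X),
      (ball z (δ / 2) ∩ T ⁻¹' ball (T z) (r z)) ∈ nhds z := by
    intro z _
    refine IsOpen.mem_nhds (isOpen_ball.inter (isOpen_ball.preimage hc)) ?_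
    exact ⟨mem_ball_self (by linarith), by simp [mem_ball, hr z]⟩
  obtain ⟨t, -, hcov⟩ := isCompact_univ.elim_nhds_subcover
    (fun z => ball z (δ / 2) ∩ T ⁻¹' ball (T z) (r z)) hUnhds
  have ht : t.Nonempty := by
    obtain ⟨x0⟩ := (inferInstance : Nonempty X)
    obtain ⟨i, hi, -⟩ := Set.mem_iUnion₂.mp (hcov (Set.mem_univ x0))
    exact ⟨i, hi⟩
  refine ⟨t.inf' ht r, ?_, ?_⟩
  · exact (Finset.lt_inf'_iff ht).mpr fun i _ => hr i
  · intro z p hp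
    obtain ⟨i, hi, hzU⟩ := Set.mem_iUnion₂.mp (hcov (Set.mem_univ z))
    obtain ⟨hz1, hz2⟩ := hzU
    have hz1' : dist z i < δ / 2 := mem_ball.mp hz1
    have hz2' : dist (T z) (T i) < r i := mem_ball.mp hz2
    have hρi : t.inf' ht r ≤ r i := Finset.inf'_le r hi
    have hpi : p ∈ ball (T i) (2 * r i) := by
      rw [mem_ball]
      calc dist p (T i) ≤ dist p (T z) + dist (T z) (T i) := dist_triangle _ _ _
        _ < t.inf' ht r + r i := add_lt_add hp hz2'
        _ ≤ 2 * r i := by linarith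
    obtain ⟨w, hw, hTw⟩ := hsub i hpi
    have hwi : dist w i < δ / 2 := mem_ball.mp hw
    have hwz : dist w z ≤ δ := by
      calc dist w z ≤ dist w i + dist i z := dist_triangle _ _ _
        _ ≤ δ / 2 + δ / 2 := by rw [dist_comm i z]; linarith
        _ = δ := by ring
    refine ⟨w, hTw, ?_⟩
    have hfin := hcontr w z hwz
    rwa [hTw] at hfin

private lemma lift_orbit {T : X → X} {lam ρ : ℝ} (hlam0 : 0 ≤ lam) (hlam1 : lam < 1)
    (P : ∀ z p : X, dist p (T z) < ρ → ∃ w : X, T w = p ∧ dist w z ≤ lam * dist p (T z)) :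
    ∀ (n : ℕ) (z p : X), dist p (T^[n] z) < ρ →
      ∃ w : X, T^[n] w = p ∧
        ∀ j ≤ n, dist (T^[j] w) (T^[j] z) ≤ lam ^ (n - j) * dist p (T^[n] z) := by
  intro n
  induction n with
  | zero =>
    intro z p hp
    refine ⟨p, rfl, fun j hj => ?_⟩
    obtain rfl : j = 0 := Nat.le_zero.mp hj
    simp
  | succ n ih =>
    intro z p hp
    rw [Function.iterate_succ_apply'] at hp
    obtain ⟨w', hw'1, hw'2⟩ := P (T^[n] z) p hp
    have hle : lam * dist p (T (T^[n] z)) ≤ dist p (T (T^[n] z)) :=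
      mul_le_of_le_one_left dist_nonneg hlam1.le
    have hw'ρ : dist w' (T^[n] z) < ρ := lt_of_le_of_lt (hw'2.trans hle) hp
    obtain ⟨w, hw1, hw2⟩ := ih z w' hw'ρ
    have hwk : T^[n + 1] w = p := by
      rw [Function.iterate_succ_apply', hw1, hw'1]
    refine ⟨w, hwk, ?_⟩
    intro j hj
    rcases Nat.lt_or_ge j (n + 1) with hlt | hge
    · have hj' : j ≤ n := by omega
      have h1 := hw2 j hj'
      have h2 : lam ^ (n - j) * dist w' (T^[n] z)
          ≤ lam ^ (n - j) * (lam * dist p (T^[n + 1] z)) := by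
        refine mul_le_mul_of_nonneg_left ?_ (pow_nonneg hlam0 _)
        rw [Function.iterate_succ_apply']
        exact hw'2
      have h3 : lam ^ (n - j) * (lam * dist p (T^[n + 1] z))
          = lam ^ (n + 1 - j) * dist p (T^[n + 1] z) := by
        rw [← mul_assoc, ← pow_succ, show n - j + 1 = n + 1 - j from by omega]
      exact h1.trans (h2.trans_eq h3)
    · obtain rfl : j = n + 1 := by omega
      rw [hwk, Nat.sub_self, pow_zero, one_mul]

private lemma transit_exists {T : X → X} (hT : IsExpandingTransitive T) (a b : X)
    {ε : ℝ} (hε : 0 < ε) :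
    ∃ k : ℕ, 1 ≤ k ∧ ∃ w : X, dist w a < ε ∧ dist (T^[k] w) b < ε := by
  obtain ⟨w0, hw0⟩ := hT.surj b
  have hU : IsOpen (T ⁻¹' ball b ε) := isOpen_ball.preimage hT.cont
  have hUne : (T ⁻¹' ball b ε).Nonempty := ⟨w0, by simp [Set.mem_preimage, hw0, mem_ball, hε]⟩
  obtain ⟨n, v, hv1, hv2⟩ := hT.transitive _ (ball a ε) hU isOpen_ball hUne ⟨a, mem_ball_self hε⟩
  refine ⟨n + 1, by omega, v, mem_ball.mp hv2, ?_⟩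
  rw [Function.iterate_succ_apply']
  exact mem_ball.mp hv1

end ManeAux

/-- the Mañé potential satisfies the triangle inequality. -/
theorem manePotential_triangle {X : Type*} [MetricSpace X] [CompactSpace X] [Nonempty X]
    [MeasurableSpace X] [BorelSpace X]
    (T : X → X) (hT : IsExpandingTransitive T)
    (θ : ℝ) (hθ0 : 0 < θ) (hθ1 : θ ≤ 1)
    (A : X → ℝ) (hA : IsThetaHolder θ A)
    (Abar : ℝ) (hAbar : IsErgMinValue T A Abar) :
    ∀ x y z : X, manePotential T A Abar x z ≤
      manePotential T A Abar x y + manePotential T A Abar y z := by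
  classical
  obtain ⟨lam, hlam0, hlam1, δ, hδ0, hcontr⟩ := hT.contracting
  obtain ⟨C, hC0, hC⟩ := hA
  obtain ⟨ρ, hρ0, hlift⟩ := uniform_lift hT.cont hT.isOpenMap hδ0 hcontr
  have horbit := lift_orbit hlam0.le hlam1 hlift
  set μ : ℝ := lam ^ θ with hμdef
  have hμ0 : 0 ≤ μ := Real.rpow_nonneg hlam0.le θ
  have hμ1 : μ < 1 := Real.rpow_lt_one hlam0.le hlam1 hθ0
  set K : ℝ := C * (1 - μ)⁻¹ with hKdef
  have hK0 : 0 ≤ K := mul_nonneg hC0 (inv_nonneg.mpr (by linarith))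
  intro x y z
  set I : ℝ → X → X → EReal := fun ε a b =>
    ⨅ k : {n : ℕ // 1 ≤ n}, birkhoffInf T A Abar ε a b k.1 with hIdef
  have hInetop : ∀ ε : ℝ, 0 < ε → ∀ a b : X, I ε a b ≠ ⊤ := by
    intro ε hε a b
    obtain ⟨k, hk, w, hw1, hw2⟩ := transit_exists hT a b hε
    have hmem : ((∑ j ∈ Finset.range k, (A (T^[j] w) - Abar) : ℝ) : EReal) ∈
        {v : EReal | ∃ z' : X, dist z' a < ε ∧ dist (T^[k] z') b < ε ∧
          v = ((∑ j ∈ Finset.range k, (A (T^[j] z') - Abar) : ℝ) : EReal)} :=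
      ⟨w, hw1, hw2, rfl⟩
    have h1 : birkhoffInf T A Abar ε a b k
        ≤ ((∑ j ∈ Finset.range k, (A (T^[j] w) - Abar) : ℝ) : EReal) := sInf_le hmem
    have h2 : I ε a b ≤ birkhoffInf T A Abar ε a b k :=
      iInf_le (fun k : {n : ℕ // 1 ≤ n} => birkhoffInf T A Abar ε a b k.1) ⟨k, hk⟩
    exact ne_top_of_le_ne_top (EReal.coe_ne_top _) (h2.trans h1)
  have hext : ∀ (ε : ℝ) (a b : X) (c : ℝ), I ε a b < (c : EReal) →
      ∃ k : ℕ, 1 ≤ k ∧ ∃ w : X, dist w a < ε ∧ dist (T^[k] w) b < ε ∧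
        (∑ j ∈ Finset.range k, (A (T^[j] w) - Abar)) < c := by
    intro ε a b c hcc
    obtain ⟨⟨k, hk⟩, hk2⟩ := iInf_lt_iff.mp hcc
    obtain ⟨v, hv, hvc⟩ := sInf_lt_iff.mp hk2
    obtain ⟨w, hw1, hw2, rfl⟩ := hv
    exact ⟨k, hk, w, hw1, hw2, EReal.coe_lt_coe_iff.mp hvc⟩
  have key : ∀ ε ε' : ℝ, 0 < ε' → 3 * ε' ≤ ε → 2 * ε' < ρ →
      I ε x z ≤ I ε' x y + I ε' y z + ((K * (2 * ε') ^ θ : ℝ) : EReal) := by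
    intro ε ε' hε'0 hε3 hε2
    refine ereal_aux (hInetop ε' hε'0 x y) (hInetop ε' hε'0 y z) ?_
    intro a b ha hb
    obtain ⟨k₁, hk₁, z₁, hz₁x, hz₁y, hs₁⟩ := hext ε' x y a ha
    obtain ⟨k₂, hk₂, z₂, hz₂y, hz₂z, hs₂⟩ := hext ε' y z b hb
    have hd₀ : dist z₂ (T^[k₁] z₁) < 2 * ε' := by
      calc dist z₂ (T^[k₁] z₁) ≤ dist z₂ y + dist y (T^[k₁] z₁) := dist_triangle _ _ _
        _ < ε' + ε' := by rw [dist_comm y]; exact add_lt_add hz₂y hz₁y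
        _ = 2 * ε' := by ring
    obtain ⟨w, hwk, hwshadow⟩ := horbit k₁ z₁ z₂ (lt_trans hd₀ hε2)
    have hd₀0 : 0 ≤ dist z₂ (T^[k₁] z₁) := dist_nonneg
    have hwx : dist w x < ε := by
      have h1 : dist w z₁ ≤ lam ^ k₁ * dist z₂ (T^[k₁] z₁) := by
        simpa using hwshadow 0 (Nat.zero_le _)
      have h2 : lam ^ k₁ * dist z₂ (T^[k₁] z₁) ≤ dist z₂ (T^[k₁] z₁) :=
        mul_le_of_le_one_left hd₀0 (pow_le_one₀ hlam0.le hlam1.le)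
      calc dist w x ≤ dist w z₁ + dist z₁ x := dist_triangle _ _ _
        _ < 2 * ε' + ε' := add_lt_add_of_le_of_lt ((h1.trans h2).trans hd₀.le) hz₁x
        _ ≤ ε := by linarith
    have hwz : dist (T^[k₁ + k₂] w) z < ε := by
      have hTw : T^[k₁ + k₂] w = T^[k₂] z₂ := by
        rw [add_comm, Function.iterate_add_apply, hwk]
      rw [hTw]
      exact lt_of_lt_of_le hz₂z (by linarith)
    have hsum_split : ∑ j ∈ Finset.range (k₁ + k₂), (A (T^[j] w) - Abar)
        = (∑ j ∈ Finset.range k₁, (A (T^[j] w) - Abar))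
          + ∑ j ∈ Finset.range k₂, (A (T^[j] z₂) - Abar) := by
      rw [Finset.sum_range_add]
      congr 1
      refine Finset.sum_congr rfl fun j _ => ?_
      rw [add_comm k₁ j, Function.iterate_add_apply, hwk]
    have hterm : ∀ j ∈ Finset.range k₁,
        A (T^[j] w) - Abar
          ≤ (A (T^[j] z₁) - Abar) + C * (μ ^ (k₁ - j) * dist z₂ (T^[k₁] z₁) ^ θ) := by
      intro j hj
      have hjle : j ≤ k₁ := (Finset.mem_range.mp hj).le
      have hdist := hwshadow j hjle
      have habs : |A (T^[j] w) - A (T^[j] z₁)|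
          ≤ C * (μ ^ (k₁ - j) * dist z₂ (T^[k₁] z₁) ^ θ) := by
        refine (hC _ _).trans ?_
        have h1 : dist (T^[j] w) (T^[j] z₁) ^ θ
            ≤ (lam ^ (k₁ - j) * dist z₂ (T^[k₁] z₁)) ^ θ :=
          Real.rpow_le_rpow dist_nonneg hdist hθ0.le
        have h2 : (lam ^ (k₁ - j) * dist z₂ (T^[k₁] z₁)) ^ θ
            = μ ^ (k₁ - j) * dist z₂ (T^[k₁] z₁) ^ θ := by
          rw [Real.mul_rpow (pow_nonneg hlam0.le _) hd₀0, pow_rpow_comm hlam0.le]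
        rw [← h2]
        exact mul_le_mul_of_nonneg_left h1 hC0
      have hub := le_abs_self (A (T^[j] w) - A (T^[j] z₁))
      linarith
    have hgeomsum : ∑ j ∈ Finset.range k₁, C * (μ ^ (k₁ - j) * dist z₂ (T^[k₁] z₁) ^ θ)
        ≤ K * (2 * ε') ^ θ := by
      have h2 : ∑ j ∈ Finset.range k₁, C * (μ ^ (k₁ - j) * dist z₂ (T^[k₁] z₁) ^ θ)
          = C * dist z₂ (T^[k₁] z₁) ^ θ * ∑ j ∈ Finset.range k₁, μ ^ (k₁ - j) := by
        rw [Finset.mul_sum]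
        exact Finset.sum_congr rfl fun j _ => by ring
      have h3 : ∑ j ∈ Finset.range k₁, μ ^ (k₁ - j) ≤ (1 - μ)⁻¹ := geom_bound hμ0 hμ1 k₁
      have h4 : dist z₂ (T^[k₁] z₁) ^ θ ≤ (2 * ε') ^ θ :=
        Real.rpow_le_rpow hd₀0 hd₀.le hθ0.le
      have h5 : 0 ≤ dist z₂ (T^[k₁] z₁) ^ θ := Real.rpow_nonneg hd₀0 θ
      calc ∑ j ∈ Finset.range k₁, C * (μ ^ (k₁ - j) * dist z₂ (T^[k₁] z₁) ^ θ)
          = C * dist z₂ (T^[k₁] z₁) ^ θ * ∑ j ∈ Finset.range k₁, μ ^ (k₁ - j) := h2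
        _ ≤ C * dist z₂ (T^[k₁] z₁) ^ θ * (1 - μ)⁻¹ :=
            mul_le_mul_of_nonneg_left h3 (mul_nonneg hC0 h5)
        _ = K * dist z₂ (T^[k₁] z₁) ^ θ := by rw [hKdef]; ring
        _ ≤ K * (2 * ε') ^ θ := mul_le_mul_of_nonneg_left h4 hK0
    have hP : ∑ j ∈ Finset.range k₁, (A (T^[j] w) - Abar)
        ≤ (∑ j ∈ Finset.range k₁, (A (T^[j] z₁) - Abar)) + K * (2 * ε') ^ θ := by
      have h1 := Finset.sum_le_sum hterm
      rw [Finset.sum_add_distrib] at h1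
      linarith
    have hmem : ((∑ j ∈ Finset.range (k₁ + k₂), (A (T^[j] w) - Abar) : ℝ) : EReal) ∈
        {v : EReal | ∃ z' : X, dist z' x < ε ∧ dist (T^[k₁ + k₂] z') z < ε ∧
          v = ((∑ j ∈ Finset.range (k₁ + k₂), (A (T^[j] z') - Abar) : ℝ) : EReal)} :=
      ⟨w, hwx, hwz, rfl⟩
    have hL : I ε x z
        ≤ ((∑ j ∈ Finset.range (k₁ + k₂), (A (T^[j] w) - Abar) : ℝ) : EReal) := by
      refine le_trans (iInf_le (fun k : {n : ℕ // 1 ≤ n} => birkhoffInf T A Abar ε x z k.1)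
        ⟨k₁ + k₂, by omega⟩) ?_
      exact sInf_le hmem
    refine hL.trans ?_
    rw [EReal.coe_le_coe_iff, hsum_split]
    linarith
  unfold manePotential
  refine iSup_le ?_
  rintro ⟨ε, hε⟩
  refine ereal_le_of_forall_pos ?_
  intro η hη
  set t : ℝ := (η / (K + 1)) ^ θ⁻¹ with htdef
  have ht0 : 0 < t := Real.rpow_pos_of_pos (div_pos hη (by linarith)) _
  set ε' : ℝ := min (ε / 3) (min (ρ / 4) (t / 2)) with hε'def
  have hε'0 : 0 < ε' := lt_min (by linarith) (lt_min (by linarith) (by linarith))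
  have hA1 : ε' ≤ ε / 3 := min_le_left _ _
  have hA2 : ε' ≤ ρ / 4 := (min_le_right _ _).trans (min_le_left _ _)
  have hA3 : ε' ≤ t / 2 := (min_le_right _ _).trans (min_le_right _ _)
  have h3 : 3 * ε' ≤ ε := by linarith
  have h2ρ : 2 * ε' < ρ := by linarith
  have hEη : K * (2 * ε') ^ θ ≤ η := by
    have h1 : (2 * ε') ^ θ ≤ t ^ θ := Real.rpow_le_rpow (by linarith) (by linarith) hθ0.le
    have h2 : t ^ θ = η / (K + 1) :=
      Real.rpow_inv_rpow (div_pos hη (by linarith)).le (ne_of_gt hθ0)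
    have hK1 : (0 : ℝ) < K + 1 := by linarith
    have h3' : K * (2 * ε') ^ θ ≤ K * (η / (K + 1)) := by
      rw [← h2]
      exact mul_le_mul_of_nonneg_left h1 hK0
    refine h3'.trans ?_
    rw [mul_comm, div_mul_eq_mul_div, div_le_iff₀ hK1]
    nlinarith
  refine (key ε ε' hε'0 h3 h2ρ).trans ?_
  refine add_le_add (add_le_add ?_ ?_) (EReal.coe_le_coe_iff.mpr hEη)
  · exact le_iSup (fun e : {e : ℝ // 0 < e} =>
      ⨅ k : {n : ℕ // 1 ≤ n}, birkhoffInf T A Abar e.1 x y k.1) ⟨ε', hε'0⟩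
  · exact le_iSup (fun e : {e : ℝ // 0 < e} =>
      ⨅ k : {n : ℕ // 1 ≤ n}, birkhoffInf T A Abar e.1 y z k.1) ⟨ε', hε'0⟩
end
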